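/- arXiv:2303.18208 — 6 statements merged into one kernel-verified Lean document; each statement's English description precedes it below -/
import Mathlib

section
/- Let A be an algebraic curvature tensor on ℝⁿ with δ ≤ R̄ ≤ Δ. If β = (β_{ij}) is a nonzero skew-symmetric array and μ ∈ ℝ satisfies ∑_{k,l} A_{ijkl} β_{kl} = μ β_{ij} for all i, j (i.e. β is an eigenvector of the curvature operator R̂ on 2-forms with eigenvalue μ), then |μ + (Δ+δ)| ≤ ((4⌊n/2⌋ − 1)/3)(Δ − δ); that is, μ lies in the interval [−(Δ+δ) − (4⌊n/2⌋−1)(Δ−δ)/3, −(Δ+δ) + (4⌊n/2⌋−1)(Δ−δ)/3]. -/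
open scoped BigOperators InnerProductSpace

/-!
Polarizing the sectional curvature bounds and combining with the Bianchi identity gives Berger's
lemma `|R(X, Y, Z, W)| ≤ 2/3 (Δ - δ)` for orthonormal `X, Y, Z, W`. A skew-symmetric `β` is a sum
`∑ λₖ uₖ ∧ vₖ` over `m ≤ ⌊n/2⌋` mutually orthogonal planes (normal form of a skew-adjoint
operator), and pairing the eigenvalue equation with `β` gives
`μ/2 ∑ λₖ² = ∑ₖₗ λₖ λₗ R(uₖ, vₖ, uₗ, vₗ)`. The `m` diagonal terms are minus sectional curvatures,
within `(Δ - δ)/2` of `-(Δ + δ)/2`; the `m(m - 1)` off-diagonal ones are bounded by Berger's lemma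
and `2|λₖ λₗ| ≤ λₖ² + λₗ²`.
-/

section CurvatureForm

variable {E : Type*} [NormedAddCommGroup E] [InnerProductSpace ℝ E]

structure IsCurvatureForm (R : E →ₗ[ℝ] E →ₗ[ℝ] E →ₗ[ℝ] E →ₗ[ℝ] ℝ) : Prop where
  antisymm_left : ∀ X Y Z W, R X Y Z W = -R Y X Z W
  antisymm_right : ∀ X Y Z W, R X Y Z W = -R X Y W Z
  bianchi : ∀ X Y Z W, R X Y Z W + R Z X Y W + R Y Z X W = 0

def SectionalCurvatureBetween (R : E →ₗ[ℝ] E →ₗ[ℝ] E →ₗ[ℝ] E →ₗ[ℝ] ℝ) (δ Δ : ℝ) : Prop :=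
  ∀ X Y, ⟪X, Y⟫_ℝ = 0 →
    δ * (‖X‖ ^ 2 * ‖Y‖ ^ 2) ≤ R X Y Y X ∧ R X Y Y X ≤ Δ * (‖X‖ ^ 2 * ‖Y‖ ^ 2)

variable {R : E →ₗ[ℝ] E →ₗ[ℝ] E →ₗ[ℝ] E →ₗ[ℝ] ℝ} {δ Δ : ℝ}

/-- Instance search does not find the additive group structure on the codomain of `f`, so `map_sub`
is unavailable in the first slot of a 4-linear map. -/
theorem LinearMap.map_sub₄ {K M₁ M₂ M₃ M₄ P : Type*} [CommRing K] [AddCommGroup M₁]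
    [AddCommGroup M₂] [AddCommGroup M₃] [AddCommGroup M₄] [AddCommGroup P] [Module K M₁]
    [Module K M₂] [Module K M₃] [Module K M₄] [Module K P]
    (f : M₁ →ₗ[K] M₂ →ₗ[K] M₃ →ₗ[K] M₄ →ₗ[K] P) (x x' : M₁) (y : M₂) (z : M₃) (w : M₄) :
    f (x - x') y z w = f x y z w - f x' y z w := by
  rw [sub_eq_add_neg, ← neg_one_smul K x', map_add, map_smul]
  simp only [LinearMap.add_apply, LinearMap.smul_apply, neg_one_smul, ← sub_eq_add_neg,
    LinearMap.sub_apply]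

/-- Add the Bianchi identities at `XYZW` and `YZWX`, subtract those at `ZWXY` and `WXYZ`. -/
theorem IsCurvatureForm.pair_symm (hR : IsCurvatureForm R) (X Y Z W : E) :
    R X Y Z W = R Z W X Y := by
  have h₁ := hR.antisymm_left
  have h₂ := hR.antisymm_right
  linarith [hR.bianchi X Y Z W, hR.bianchi Y Z W X, hR.bianchi Z W X Y, hR.bianchi W X Y Z,
    h₂ Y Z X W, h₁ X Z W Y, h₂ Z X W Y, h₁ Y W X Z, h₂ W Y X Z, h₂ W X Z Y, h₂ Z W Y X, h₂ X Y Z W]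

theorem SectionalCurvatureBetween.of_area_eq_one
    (h : ∀ X Y : E, ‖X‖ ^ 2 * ‖Y‖ ^ 2 - ⟪X, Y⟫_ℝ ^ 2 = 1 → δ ≤ R X Y Y X ∧ R X Y Y X ≤ Δ) :
    SectionalCurvatureBetween R δ Δ := by
  intro X Y hXY
  rcases eq_or_ne (‖X‖ * ‖Y‖) 0 with hs | hs
  · rcases mul_eq_zero.1 hs with hX | hY
    · simp [norm_eq_zero.1 hX]
    · simp [norm_eq_zero.1 hY]
  set c := (‖X‖ * ‖Y‖)⁻¹
  have hscale : R (c • X) Y Y (c • X) = c ^ 2 * R X Y Y X := by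
    simp only [map_smul, LinearMap.smul_apply, smul_eq_mul]
    ring
  have harea : ‖c • X‖ ^ 2 * ‖Y‖ ^ 2 - ⟪c • X, Y⟫_ℝ ^ 2 = 1 := by
    have hX : ‖X‖ ≠ 0 := left_ne_zero_of_mul hs
    have hY : ‖Y‖ ≠ 0 := right_ne_zero_of_mul hs
    rw [real_inner_smul_left, hXY, mul_zero, zero_pow two_ne_zero, sub_zero, norm_smul, norm_inv,
      norm_mul, norm_norm, norm_norm]
    field_simp
  have hpos : 0 < (‖X‖ * ‖Y‖) ^ 2 := by positivity
  obtain ⟨h₁, h₂⟩ := h _ _ harea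
  rw [hscale, inv_pow, ← div_eq_inv_mul] at h₁ h₂
  rw [← mul_pow]
  exact ⟨(le_div_iff₀ hpos).1 h₁, (div_le_iff₀ hpos).1 h₂⟩

namespace SectionalCurvatureBetween

variable (hK : SectionalCurvatureBetween R δ Δ)
include hK

theorem le_of_orthonormal {X Y : E} (hX : ‖X‖ = 1) (hY : ‖Y‖ = 1) (hXY : ⟪X, Y⟫_ℝ = 0) :
    δ ≤ Δ := by
  have := hK X Y hXY
  simp only [hX, hY, one_pow, mul_one] at this
  linarith [this.1, this.2]

theorem abs_apply_add_le (hR : IsCurvatureForm R) {X Y : E} (hX : ‖X‖ = 1) (hY : ‖Y‖ = 1)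
    (hXY : ⟪X, Y⟫_ℝ = 0) :
    |R X Y X Y + (Δ + δ) / 2| ≤ (Δ - δ) / 2 := by
  have := hK X Y hXY
  simp only [hX, hY, one_pow, mul_one, hR.antisymm_right X Y Y X] at this
  rw [abs_le]
  constructor <;> linarith [this.1, this.2]

theorem abs_apply_le_of_orthogonal (hR : IsCurvatureForm R) {X Y Z : E} (hXY : ⟪X, Y⟫_ℝ = 0)
    (hXZ : ⟪X, Z⟫_ℝ = 0) (hYZ : ⟪Y, Z⟫_ℝ = 0) (hY : ‖Y‖ = 1) (hZ : ‖Z‖ = 1) :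
    |R X Y Z X| ≤ (Δ - δ) / 2 * ‖X‖ ^ 2 := by
  have hsymm : R X Z Y X = R X Y Z X := by
    rw [hR.pair_symm X Z Y X, hR.antisymm_left Y X X Z, hR.antisymm_right X Y X Z, neg_neg]
  have hpolar : 4 * R X Y Z X = R X (Y + Z) (Y + Z) X - R X (Y - Z) (Y - Z) X := by
    simp only [map_add, map_sub, LinearMap.add_apply, LinearMap.sub_apply]
    linarith
  have hplus := hK X (Y + Z) (by rw [inner_add_right, hXY, hXZ, add_zero])
  have hminus := hK X (Y - Z) (by rw [inner_sub_right, hXY, hXZ, sub_zero])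
  rw [norm_add_sq_real, hYZ, hY, hZ] at hplus
  rw [norm_sub_sq_real, hYZ, hY, hZ] at hminus
  rw [abs_le]
  constructor <;> nlinarith [hplus.1, hplus.2, hminus.1, hminus.2]

theorem abs_add_apply_le (hR : IsCurvatureForm R) {X Y Z W : E}
    (hON : Orthonormal ℝ ![X, Y, Z, W]) :
    |R X Y Z W + R W Y Z X| ≤ Δ - δ := by
  simp only [orthonormal_vecCons_iff, Fin.forall_fin_succ, Matrix.cons_val_zero,
    Matrix.cons_val_succ, IsEmpty.forall_iff, and_true] at hON
  obtain ⟨hX, ⟨hXY, hXZ, hXW⟩, hY, ⟨hYZ, hYW⟩, hZ, hZW, hW, -⟩ := hON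
  have hpolar :
      2 * (R X Y Z W + R W Y Z X) = R (X + W) Y Z (X + W) - R (X - W) Y Z (X - W) := by
    simp only [map_add, map_sub, LinearMap.map_sub₄, LinearMap.add_apply]
    ring
  have hplus := hK.abs_apply_le_of_orthogonal hR (X := X + W)
    (by rw [inner_add_left, hXY, real_inner_comm, hYW, add_zero])
    (by rw [inner_add_left, hXZ, real_inner_comm, hZW, add_zero]) hYZ hY hZ
  have hminus := hK.abs_apply_le_of_orthogonal hR (X := X - W)
    (by rw [inner_sub_left, hXY, real_inner_comm, hYW, sub_zero])
    (by rw [inner_sub_left, hXZ, real_inner_comm, hZW, sub_zero]) hYZ hY hZ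
  rw [norm_add_sq_real, hXW, hX, hW] at hplus
  rw [norm_sub_sq_real, hXW, hX, hW] at hminus
  have := (abs_sub _ _).trans (add_le_add hplus hminus)
  rw [← hpolar, abs_mul] at this
  norm_num at this
  linarith

theorem abs_apply_le_of_orthonormal (hR : IsCurvatureForm R) {X Y Z W : E}
    (hON : Orthonormal ℝ ![X, Y, Z, W]) :
    |R X Y Z W| ≤ 2 / 3 * (Δ - δ) := by
  have h₁ := hK.abs_add_apply_le hR hON
  have h₂ := hK.abs_add_apply_le hR (X := X) (Y := Z) (Z := W) (W := Y)
    (by convert hON.comp ![0, 2, 3, 1] (by decide) using 1; ext i; fin_cases i <;> rfl)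
  have h₃ := hK.abs_add_apply_le hR (X := X) (Y := W) (Z := Y) (W := Z)
    (by convert hON.comp ![0, 3, 1, 2] (by decide) using 1; ext i; fin_cases i <;> rfl)
  -- `h₁, h₂, h₃` bound the pairwise differences of the three terms of the Bianchi identity.
  have hb : R Z X Y W = R X Z W Y := by
    rw [hR.pair_symm Z X Y W, hR.antisymm_left Y W Z X, hR.antisymm_right W Y Z X, neg_neg,
      hR.pair_symm W Y X Z]
  have hc : R Y Z X W = R X W Y Z := hR.pair_symm Y Z X W
  have ha' : R Z W Y X = -R X Y Z W := by rw [hR.pair_symm Z W Y X, hR.antisymm_left Y X Z W]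
  have hb' : R W Y Z X = -R X Z W Y := by rw [hR.pair_symm W Y Z X, hR.antisymm_left Z X W Y]
  have hc' : R Y Z W X = -R X W Y Z := by rw [hR.pair_symm Y Z W X, hR.antisymm_left W X Y Z]
  have hbianchi := hR.bianchi X Y Z W
  rw [hb', abs_le] at h₁
  rw [hc', abs_le] at h₂
  rw [ha', abs_le] at h₃
  rw [hb, hc] at hbianchi
  rw [abs_le]
  constructor <;> linarith [h₁.1, h₁.2, h₂.1, h₂.2, h₃.1, h₃.2]

theorem abs_mul_mul_apply_le (hR : IsCurvatureForm R) {m : ℕ} {u v : Fin m → E}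
    (hON : Orthonormal ℝ (Sum.elim u v)) {k l : Fin m} (hkl : k ≠ l) (a b : ℝ) :
    |a * b * R (u k) (v k) (u l) (v l)| ≤ (Δ - δ) / 3 * (a ^ 2 + b ^ 2) := by
  have h4 : Orthonormal ℝ ![u k, v k, u l, v l] := by
    convert hON.comp ![.inl k, .inr k, .inl l, .inr l] ?_ using 1
    · ext i; fin_cases i <;> rfl
    · intro i j h; fin_cases i <;> fin_cases j <;> simp_all [hkl.symm]
  have hδΔ : δ ≤ Δ := hK.le_of_orthonormal (hON.1 (.inl k)) (hON.1 (.inr k)) (hON.2 Sum.inl_ne_inr)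
  have h := mul_le_mul_of_nonneg_left (hK.abs_apply_le_of_orthonormal hR h4)
    (mul_nonneg (abs_nonneg a) (abs_nonneg b))
  rw [abs_mul, abs_mul]
  nlinarith [sq_abs a, sq_abs b, sq_nonneg (|a| - |b|)]

theorem abs_sum_add_le (hR : IsCurvatureForm R) {m : ℕ} {u v : Fin m → E}
    (hON : Orthonormal ℝ (Sum.elim u v)) (lam : Fin m → ℝ) :
    |∑ k, ∑ l, lam k * lam l * R (u k) (v k) (u l) (v l) + (Δ + δ) / 2 * ∑ k, lam k ^ 2| ≤
      (4 * m - 1) / 6 * (Δ - δ) * ∑ k, lam k ^ 2 := by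
  have hu k : ‖u k‖ = 1 := hON.1 (.inl k)
  have hv k : ‖v k‖ = 1 := hON.1 (.inr k)
  have huv k : ⟪u k, v k⟫_ℝ = 0 := hON.2 Sum.inl_ne_inr
  -- After summing over `k, l`, the diagonal correction `-λₖ²` turns `4m` into `4m - 1`.
  have hterm k l : |lam k * lam l * R (u k) (v k) (u l) (v l) +
      if k = l then (Δ + δ) / 2 * lam k ^ 2 else 0| ≤
      (Δ - δ) / 6 * (2 * lam k ^ 2 + 2 * lam l ^ 2 - if k = l then lam k ^ 2 else 0) := by
    rcases eq_or_ne k l with rfl | hkl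
    · rw [if_pos rfl, if_pos rfl]
      calc _ = |lam k ^ 2 * (R (u k) (v k) (u k) (v k) + (Δ + δ) / 2)| := by ring_nf
        _ = lam k ^ 2 * |R (u k) (v k) (u k) (v k) + (Δ + δ) / 2| := by
            rw [abs_mul, abs_of_nonneg (sq_nonneg _)]
        _ ≤ lam k ^ 2 * ((Δ - δ) / 2) :=
            mul_le_mul_of_nonneg_left (hK.abs_apply_add_le hR (hu k) (hv k) (huv k)) (sq_nonneg _)
        _ = _ := by ring
    · rw [if_neg hkl, if_neg hkl, add_zero, sub_zero]
      linarith [hK.abs_mul_mul_apply_le hR hON hkl (lam k) (lam l)]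
  calc _ = |∑ k, ∑ l, (lam k * lam l * R (u k) (v k) (u l) (v l) +
          if k = l then (Δ + δ) / 2 * lam k ^ 2 else 0)| := by
        simp only [Finset.sum_add_distrib, Finset.sum_ite_eq, Finset.mem_univ, if_true,
          Finset.mul_sum]
    _ ≤ ∑ k, ∑ l, |lam k * lam l * R (u k) (v k) (u l) (v l) +
          if k = l then (Δ + δ) / 2 * lam k ^ 2 else 0| :=
        (Finset.abs_sum_le_sum_abs _ _).trans
          (Finset.sum_le_sum fun k _ => Finset.abs_sum_le_sum_abs _ _)
    _ ≤ ∑ k, ∑ l, (Δ - δ) / 6 * (2 * lam k ^ 2 + 2 * lam l ^ 2 - if k = l then lam k ^ 2 else 0) :=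
        Finset.sum_le_sum fun k _ => Finset.sum_le_sum fun l _ => hterm k l
    _ = _ := by
        simp only [← Finset.mul_sum, Finset.sum_sub_distrib, Finset.sum_add_distrib,
          Finset.sum_ite_eq, Finset.mem_univ, if_true, Finset.sum_const, Finset.card_univ,
          Fintype.card_fin, nsmul_eq_mul]
        ring

theorem abs_sum_add_le_finrank [FiniteDimensional ℝ E] (hR : IsCurvatureForm R) {m : ℕ}
    {u v : Fin m → E} (hON : Orthonormal ℝ (Sum.elim u v)) (lam : Fin m → ℝ) :
    |∑ k, ∑ l, lam k * lam l * R (u k) (v k) (u l) (v l) + (Δ + δ) / 2 * ∑ k, lam k ^ 2| ≤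
      (4 * (Module.finrank ℝ E / 2 : ℕ) - 1) / 6 * (Δ - δ) * ∑ k, lam k ^ 2 := by
  refine (hK.abs_sum_add_le hR hON lam).trans ?_
  rcases Nat.eq_zero_or_pos m with rfl | hm
  · simp
  have hδΔ : δ ≤ Δ := hK.le_of_orthonormal (hON.1 (.inl ⟨0, hm⟩)) (hON.1 (.inr ⟨0, hm⟩))
    (hON.2 Sum.inl_ne_inr)
  have hcard := hON.linearIndependent.fintype_card_le_finrank
  rw [Fintype.card_sum, Fintype.card_fin] at hcard
  have : (m : ℝ) ≤ (Module.finrank ℝ E / 2 : ℕ) := by exact_mod_cast (by omega)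
  gcongr

end SectionalCurvatureBetween

end CurvatureForm

section SkewAdjoint

variable {E : Type*} [NormedAddCommGroup E] [InnerProductSpace ℝ E]

theorem Orthonormal.sum_elim_cons {m : ℕ} {u v : Fin m → E} (h : Orthonormal ℝ (Sum.elim u v))
    {a b : E} (hab : Orthonormal ℝ ![a, b]) (ha : ∀ i, ⟪a, Sum.elim u v i⟫_ℝ = 0)
    (hb : ∀ i, ⟪b, Sum.elim u v i⟫_ℝ = 0) :
    Orthonormal ℝ (Sum.elim (Fin.cons a u : Fin (m + 1) → E) (Fin.cons b v)) := by
  classical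
  have ha1 : ‖a‖ = 1 := hab.1 0
  have hb1 : ‖b‖ = 1 := hab.1 1
  have hab' : ⟪a, b⟫_ℝ = 0 := hab.2 (by decide : (0 : Fin 2) ≠ 1)
  have hba : ⟪b, a⟫_ℝ = 0 := inner_eq_zero_symm.1 hab'
  have hau k : ⟪a, u k⟫_ℝ = 0 := ha (.inl k)
  have hav k : ⟪a, v k⟫_ℝ = 0 := ha (.inr k)
  have hbu k : ⟪b, u k⟫_ℝ = 0 := hb (.inl k)
  have hbv k : ⟪b, v k⟫_ℝ = 0 := hb (.inr k)
  have hua k : ⟪u k, a⟫_ℝ = 0 := inner_eq_zero_symm.1 (hau k)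
  have hva k : ⟪v k, a⟫_ℝ = 0 := inner_eq_zero_symm.1 (hav k)
  have hub k : ⟪u k, b⟫_ℝ = 0 := inner_eq_zero_symm.1 (hbu k)
  have hvb k : ⟪v k, b⟫_ℝ = 0 := inner_eq_zero_symm.1 (hbv k)
  rw [orthonormal_iff_ite] at h ⊢
  have huu k l : ⟪u k, u l⟫_ℝ = if k = l then 1 else 0 := by simpa using h (.inl k) (.inl l)
  have hvv k l : ⟪v k, v l⟫_ℝ = if k = l then 1 else 0 := by simpa using h (.inr k) (.inr l)
  have huv k l : ⟪u k, v l⟫_ℝ = 0 := by simpa using h (.inl k) (.inr l)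
  have hvu k l : ⟪v k, u l⟫_ℝ = 0 := by simpa using h (.inr k) (.inl l)
  rintro (i | i) (j | j) <;> cases i using Fin.cases <;> cases j using Fin.cases <;>
    simp [Fin.succ_ne_zero, (Fin.succ_ne_zero _).symm, ha1, hb1, hab', hba, hua, hva, hub, hvb,
      hau, hav, hbu, hbv, huu, hvv, huv, hvu]

variable {f : E →ₗ[ℝ] E}

theorem exists_eigenvector_sq_of_skew [FiniteDimensional ℝ E]
    (hf : ∀ x y, ⟪f x, y⟫_ℝ = -⟪x, f y⟫_ℝ) {V : Submodule ℝ E} (hV : ∀ x ∈ V, f x ∈ V)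
    {x : E} (hxV : x ∈ V) (hx : f x ≠ 0) :
    ∃ v ∈ V, ‖v‖ = 1 ∧ f v ≠ 0 ∧ ∃ θ : ℝ, f (f v) = θ • v := by
  let g : V →ₗ[ℝ] V := (f ∘ₗ f).restrict fun y hy => hV _ (hV y hy)
  have hg : g.IsSymmetric := fun y z => by
    simp only [g, Submodule.coe_inner, LinearMap.coe_restrict_apply, LinearMap.comp_apply]
    rw [hf, hf, neg_neg]
  let b := hg.eigenvectorBasis rfl
  obtain ⟨i, hi⟩ : ∃ i, f (b i) ≠ 0 := by
    by_contra! h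
    refine hx ?_
    have := congrArg (fun y : V => f y) (b.sum_repr' ⟨x, hxV⟩)
    simp only [Submodule.coe_sum, Submodule.coe_smul, map_sum, map_smul, h, smul_zero,
      Finset.sum_const_zero] at this
    exact this.symm
  exact ⟨b i, (b i).2, b.orthonormal.1 i, hi, hg.eigenvalues rfl i,
    congrArg Subtype.val (hg.apply_eigenvectorBasis rfl i)⟩

theorem exists_orthonormal_plane_of_skew [FiniteDimensional ℝ E]
    (hf : ∀ x y, ⟪f x, y⟫_ℝ = -⟪x, f y⟫_ℝ) {V : Submodule ℝ E} (hV : ∀ x ∈ V, f x ∈ V)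
    {x : E} (hxV : x ∈ V) (hx : f x ≠ 0) :
    ∃ u ∈ V, ∃ v ∈ V, ∃ τ : ℝ, Orthonormal ℝ ![u, v] ∧ f u = -τ • v ∧ f v = τ • u := by
  obtain ⟨v, hvV, hv, hfv, θ, hθ⟩ := exists_eigenvector_sq_of_skew hf hV hxV hx
  set τ := ‖f v‖
  have hτ : τ ≠ 0 := norm_ne_zero_iff.mpr hfv
  have hθτ : θ = -τ ^ 2 := by
    have := hf (f v) v
    rw [hθ, real_inner_smul_left, real_inner_self_eq_norm_sq, hv, real_inner_self_eq_norm_sq]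
      at this
    linarith
  refine ⟨τ⁻¹ • f v, V.smul_mem _ (hV v hvV), v, hvV, τ, ?_, ?_, ?_⟩
  · simp only [orthonormal_vecCons_iff, Fin.forall_fin_one, Matrix.cons_val_zero]
    have hvfv : ⟪f v, v⟫_ℝ = 0 := by linarith [hf v v, real_inner_comm v (f v)]
    exact ⟨norm_smul_inv_norm hfv, by rw [real_inner_smul_left, hvfv, mul_zero], hv,
      fun i => i.elim0, .of_isEmpty _⟩
  · rw [map_smul, hθ, hθτ, smul_smul]
    congr 1
    field_simp
  · rw [smul_smul, mul_inv_cancel₀ hτ, one_smul]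

theorem apply_eq_sum_cons_of_invariant_plane {V : Submodule ℝ E} {a b : E} (haV : a ∈ V)
    (hbV : b ∈ V) (hab : Orthonormal ℝ ![a, b]) {τ : ℝ} (hfa : f a = -τ • b)
    (hfb : f b = τ • a) {m : ℕ} {u v : Fin m → E} {lam : Fin m → ℝ}
    (hperp : ∀ i, ⟪a, Sum.elim u v i⟫_ℝ = 0 ∧ ⟪b, Sum.elim u v i⟫_ℝ = 0)
    (hrepr : ∀ z ∈ V, ⟪a, z⟫_ℝ = 0 → ⟪b, z⟫_ℝ = 0 →
      f z = ∑ k, lam k • (⟪v k, z⟫_ℝ • u k - ⟪u k, z⟫_ℝ • v k))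
    {y : E} (hy : y ∈ V) :
    f y = ∑ k, (Fin.cons τ lam : Fin (m + 1) → ℝ) k •
      (⟪(Fin.cons b v : Fin (m + 1) → E) k, y⟫_ℝ • (Fin.cons a u : Fin (m + 1) → E) k -
        ⟪(Fin.cons a u : Fin (m + 1) → E) k, y⟫_ℝ • (Fin.cons b v : Fin (m + 1) → E) k) := by
  have ha : ‖a‖ = 1 := hab.1 0
  have hb : ‖b‖ = 1 := hab.1 1
  have hab' : ⟪a, b⟫_ℝ = 0 := hab.2 (by decide : (0 : Fin 2) ≠ 1)
  set z := y - ⟪a, y⟫_ℝ • a - ⟪b, y⟫_ℝ • b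
  have hz : f z = ∑ k, lam k • (⟪v k, z⟫_ℝ • u k - ⟪u k, z⟫_ℝ • v k) := by
    refine hrepr z (V.sub_mem (V.sub_mem hy (V.smul_mem _ haV)) (V.smul_mem _ hbV)) ?_ ?_ <;>
      simp only [z, inner_sub_right, real_inner_smul_right, real_inner_self_eq_norm_sq, ha, hb,
        hab', real_inner_comm a b] <;> ring
  have hinner i : ⟪Sum.elim u v i, z⟫_ℝ = ⟪Sum.elim u v i, y⟫_ℝ := by
    simp only [z, inner_sub_right, real_inner_smul_right, real_inner_comm a, real_inner_comm b,
      (hperp i).1, (hperp i).2]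
    ring
  have huz k : ⟪u k, z⟫_ℝ = ⟪u k, y⟫_ℝ := hinner (.inl k)
  have hvz k : ⟪v k, z⟫_ℝ = ⟪v k, y⟫_ℝ := hinner (.inr k)
  have hyz : y = z + ⟪a, y⟫_ℝ • a + ⟪b, y⟫_ℝ • b := by simp only [z]; abel
  rw [Fin.sum_univ_succ]
  simp only [Fin.cons_zero, Fin.cons_succ]
  conv_lhs => rw [hyz, map_add, map_add, hz, map_smul, map_smul, hfa, hfb]
  simp only [huz, hvz]
  module

theorem exists_planes_of_skew [FiniteDimensional ℝ E]
    (hf : ∀ x y, ⟪f x, y⟫_ℝ = -⟪x, f y⟫_ℝ) (V : Submodule ℝ E) (hV : ∀ x ∈ V, f x ∈ V) :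
    ∃ (m : ℕ) (u v : Fin m → E) (lam : Fin m → ℝ), Orthonormal ℝ (Sum.elim u v) ∧
      (∀ i, Sum.elim u v i ∈ V) ∧
      ∀ x ∈ V, f x = ∑ k, lam k • (⟪v k, x⟫_ℝ • u k - ⟪u k, x⟫_ℝ • v k) := by
  induction hd : Module.finrank ℝ V using Nat.strong_induction_on generalizing V with
  | _ d ih =>
  by_cases h0 : ∀ x ∈ V, f x = 0
  · exact ⟨0, finZeroElim, finZeroElim, finZeroElim, .of_isEmpty _, isEmptyElim,
      fun x hx => by simp [h0 x hx]⟩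
  push Not at h0
  obtain ⟨x, hxV, hx⟩ := h0
  obtain ⟨a, haV, b, hbV, τ, hab, hfa, hfb⟩ := exists_orthonormal_plane_of_skew hf hV hxV hx
  set W := V ⊓ (ℝ ∙ a)ᗮ ⊓ (ℝ ∙ b)ᗮ
  have hmemW y : y ∈ W ↔ y ∈ V ∧ ⟪a, y⟫_ℝ = 0 ∧ ⟪b, y⟫_ℝ = 0 := by
    simp [W, Submodule.mem_orthogonal_singleton_iff_inner_right, and_assoc]
  have hWV : W < V := by
    refine lt_of_le_of_ne (fun y hy => ((hmemW y).1 hy).1) fun h => ?_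
    have := ((hmemW a).1 (h ▸ haV)).2.1
    rw [real_inner_self_eq_norm_sq, show ‖a‖ = 1 from hab.1 0] at this
    norm_num at this
  have hW : ∀ y ∈ W, f y ∈ W := by
    intro y hy
    obtain ⟨hyV, hay, hby⟩ := (hmemW y).1 hy
    refine (hmemW _).2 ⟨hV y hyV, ?_, ?_⟩
    · rw [← neg_eq_zero, ← hf, hfa, real_inner_smul_left, hby, mul_zero]
    · rw [← neg_eq_zero, ← hf, hfb, real_inner_smul_left, hay, mul_zero]
  obtain ⟨m, u, v, lam, hON, huvW, hrepr⟩ :=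
    ih _ (hd ▸ Submodule.finrank_lt_finrank_of_lt hWV) W hW rfl
  have hperp i : ⟪a, Sum.elim u v i⟫_ℝ = 0 ∧ ⟪b, Sum.elim u v i⟫_ℝ = 0 :=
    ((hmemW _).1 (huvW i)).2
  refine ⟨m + 1, Fin.cons a u, Fin.cons b v, Fin.cons τ lam,
    hON.sum_elim_cons hab (fun i => (hperp i).1) (fun i => (hperp i).2), ?_,
    fun y hy => apply_eq_sum_cons_of_invariant_plane haV hbV hab hfa hfb hperp
      (fun z hz haz hbz => hrepr z ((hmemW z).2 ⟨hz, haz, hbz⟩)) hy⟩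
  rintro (i | i) <;> cases i using Fin.cases
  exacts [haV, ((hmemW _).1 (huvW (.inl _))).1, hbV, ((hmemW _).1 (huvW (.inr _))).1]

end SkewAdjoint

section Coordinates

variable {n : ℕ}

noncomputable def curvForm (A : Fin n → Fin n → Fin n → Fin n → ℝ) :
    EuclideanSpace ℝ (Fin n) →ₗ[ℝ] EuclideanSpace ℝ (Fin n) →ₗ[ℝ] EuclideanSpace ℝ (Fin n) →ₗ[ℝ]
      EuclideanSpace ℝ (Fin n) →ₗ[ℝ] ℝ :=
  let x (i : Fin n) := (EuclideanSpace.proj (𝕜 := ℝ) i).toLinearMap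
  ∑ i, ∑ j, ∑ p, ∑ q, A i j p q • (x i).smulRight ((x j).smulRight ((x p).smulRight (x q)))

theorem curvForm_apply (A : Fin n → Fin n → Fin n → Fin n → ℝ)
    (X Y Z W : EuclideanSpace ℝ (Fin n)) :
    curvForm A X Y Z W = ∑ i, ∑ j, ∑ p, ∑ q, A i j p q * X i * Y j * Z p * W q := by
  simp [curvForm, LinearMap.sum_apply, mul_assoc]

theorem isCurvatureForm_curvForm {A : Fin n → Fin n → Fin n → Fin n → ℝ}
    (hA1 : ∀ i j p q, A i j p q = -A j i p q) (hA2 : ∀ i j p q, A i j p q = -A i j q p)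
    (hBianchi : ∀ i j p q, A i j p q + A p i j q + A j p i q = 0) :
    IsCurvatureForm (curvForm A) where
  antisymm_left X Y Z W := by
    simp only [curvForm_apply, ← Finset.sum_neg_distrib]
    rw [Finset.sum_comm]
    refine Finset.sum_congr rfl fun j _ => Finset.sum_congr rfl fun i _ =>
      Finset.sum_congr rfl fun p _ => Finset.sum_congr rfl fun q _ => ?_
    rw [hA1]
    ring
  antisymm_right X Y Z W := by
    simp only [curvForm_apply, ← Finset.sum_neg_distrib]
    refine Finset.sum_congr rfl fun i _ => Finset.sum_congr rfl fun j _ => ?_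
    rw [Finset.sum_comm]
    refine Finset.sum_congr rfl fun q _ => Finset.sum_congr rfl fun p _ => ?_
    rw [hA2]
    ring
  bianchi X Y Z W := by
    have hcycle (g : Fin n → Fin n → Fin n → ℝ) :
        ∑ a, ∑ b, ∑ c, g a b c = ∑ b, ∑ c, ∑ a, g a b c := by
      rw [Finset.sum_comm]
      exact Finset.sum_congr rfl fun _ _ => Finset.sum_comm
    rw [curvForm_apply, curvForm_apply, curvForm_apply,
      hcycle fun a b c => ∑ d, A a b c d * Z a * X b * Y c * W d,
      ← hcycle fun c a b => ∑ d, A a b c d * Y a * Z b * X c * W d]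
    simp only [← Finset.sum_add_distrib]
    refine Finset.sum_eq_zero fun i _ => Finset.sum_eq_zero fun j _ =>
      Finset.sum_eq_zero fun p _ => Finset.sum_eq_zero fun q _ => ?_
    linear_combination (X i * Y j * Z p * W q) * hBianchi i j p q

def wedge (X Y : EuclideanSpace ℝ (Fin n)) : Fin n → Fin n → ℝ := fun i j => X i * Y j - Y i * X j

/-- `⟨β, R̂ γ⟩` for the curvature operator `R̂` on 2-forms. -/
noncomputable def curvPairing (A : Fin n → Fin n → Fin n → Fin n → ℝ) :
    (Fin n → Fin n → ℝ) →ₗ[ℝ] (Fin n → Fin n → ℝ) →ₗ[ℝ] ℝ :=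
  LinearMap.mk₂ ℝ (fun β γ => ∑ i, ∑ j, ∑ p, ∑ q, A i j p q * β i j * γ p q)
    (fun _ _ _ => by simp only [Pi.add_apply, mul_add, add_mul, Finset.sum_add_distrib])
    (fun _ _ _ => by
      simp only [Pi.smul_apply, smul_eq_mul, Finset.mul_sum, mul_assoc, mul_left_comm])
    (fun _ _ _ => by simp only [Pi.add_apply, mul_add, Finset.sum_add_distrib])
    (fun _ _ _ => by
      simp only [Pi.smul_apply, smul_eq_mul, Finset.mul_sum, mul_assoc, mul_left_comm])

noncomputable def frobeniusInner : (Fin n → Fin n → ℝ) →ₗ[ℝ] (Fin n → Fin n → ℝ) →ₗ[ℝ] ℝ :=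
  LinearMap.mk₂ ℝ (fun β γ => ∑ i, ∑ j, β i j * γ i j)
    (fun _ _ _ => by simp only [Pi.add_apply, add_mul, Finset.sum_add_distrib])
    (fun _ _ _ => by simp only [Pi.smul_apply, smul_eq_mul, Finset.mul_sum, mul_assoc])
    (fun _ _ _ => by simp only [Pi.add_apply, mul_add, Finset.sum_add_distrib])
    (fun _ _ _ => by simp only [Pi.smul_apply, smul_eq_mul, Finset.mul_sum, mul_left_comm])

theorem curvPairing_wedge {A : Fin n → Fin n → Fin n → Fin n → ℝ}
    (hR : IsCurvatureForm (curvForm A)) (X Y Z W : EuclideanSpace ℝ (Fin n)) :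
    curvPairing A (wedge X Y) (wedge Z W) = 4 * curvForm A X Y Z W := by
  have hexpand : curvPairing A (wedge X Y) (wedge Z W) = curvForm A X Y Z W -
      curvForm A X Y W Z - curvForm A Y X Z W + curvForm A Y X W Z := by
    simp only [curvPairing, LinearMap.mk₂_apply, wedge, curvForm_apply, mul_sub, sub_mul,
      Finset.sum_sub_distrib, mul_assoc]
    ring
  rw [hexpand, hR.antisymm_right X Y W Z, hR.antisymm_left Y X Z W, hR.antisymm_left Y X W Z,
    hR.antisymm_right X Y W Z]
  ring

theorem frobeniusInner_wedge (X Y Z W : EuclideanSpace ℝ (Fin n)) :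
    frobeniusInner (wedge X Y) (wedge Z W) =
      2 * (⟪X, Z⟫_ℝ * ⟪Y, W⟫_ℝ - ⟪X, W⟫_ℝ * ⟪Y, Z⟫_ℝ) := by
  calc _ = ∑ i, ∑ j, (Z i * X i * (W j * Y j) - W i * X i * (Z j * Y j) -
        Z i * Y i * (W j * X j) + W i * Y i * (Z j * X j)) :=
        Finset.sum_congr rfl fun i _ => Finset.sum_congr rfl fun j _ => by simp only [wedge]; ring
    _ = _ := by
        simp only [Finset.sum_add_distrib, Finset.sum_sub_distrib, ← Finset.sum_mul_sum,
          PiLp.inner_apply, RCLike.inner_apply, conj_trivial]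
        ring

theorem exists_eq_sum_wedge {β : Fin n → Fin n → ℝ} (hβ : ∀ i j, β i j = -β j i) :
    ∃ (m : ℕ) (u v : Fin m → EuclideanSpace ℝ (Fin n)) (lam : Fin m → ℝ),
      Orthonormal ℝ (Sum.elim u v) ∧ β = ∑ k, lam k • wedge (u k) (v k) := by
  set f := Matrix.toEuclideanLin (Matrix.of β)
  have hf x y : ⟪f x, y⟫_ℝ = -⟪x, f y⟫_ℝ := by
    simp only [f, Matrix.toLpLin_apply, PiLp.inner_apply, RCLike.inner_apply, conj_trivial,
      Matrix.mulVec, dotProduct, Matrix.of_apply, Finset.sum_mul, Finset.mul_sum,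
      ← Finset.sum_neg_distrib]
    rw [Finset.sum_comm]
    refine Finset.sum_congr rfl fun i _ => Finset.sum_congr rfl fun j _ => ?_
    rw [hβ]
    ring
  obtain ⟨m, u, v, lam, hON, -, hrepr⟩ := exists_planes_of_skew hf ⊤ fun _ _ => trivial
  refine ⟨m, u, v, lam, hON, funext fun i => funext fun j => ?_⟩
  have := congrArg (· i) (hrepr (EuclideanSpace.single j 1) trivial)
  simp only [f, Matrix.toLpLin_apply, PiLp.ofLp_single, Matrix.mulVec_single, MulOpposite.op_one,
    one_smul, Matrix.col_apply, Matrix.of_apply, EuclideanSpace.inner_single_right,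
    Real.ringHom_apply, one_mul, WithLp.ofLp_sum, WithLp.ofLp_smul, WithLp.ofLp_sub,
    Finset.sum_apply, Pi.smul_apply, Pi.sub_apply, smul_eq_mul, wedge] at this ⊢
  rw [this]
  exact Finset.sum_congr rfl fun k _ => by ring

theorem frobeniusInner_sum_wedge {m : ℕ} {u v : Fin m → EuclideanSpace ℝ (Fin n)}
    (hON : Orthonormal ℝ (Sum.elim u v)) (lam : Fin m → ℝ) :
    frobeniusInner (∑ k, lam k • wedge (u k) (v k)) (∑ k, lam k • wedge (u k) (v k)) =
      2 * ∑ k, lam k ^ 2 := by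
  classical
  rw [orthonormal_iff_ite] at hON
  have huu k l : ⟪u k, u l⟫_ℝ = if k = l then 1 else 0 := by simpa using hON (.inl k) (.inl l)
  have hvv k l : ⟪v k, v l⟫_ℝ = if k = l then 1 else 0 := by simpa using hON (.inr k) (.inr l)
  have huv k l : ⟪u k, v l⟫_ℝ = 0 := by simpa using hON (.inl k) (.inr l)
  have hvu k l : ⟪v k, u l⟫_ℝ = 0 := by simpa using hON (.inr k) (.inl l)
  simp only [map_sum, map_smul, LinearMap.sum_apply, LinearMap.smul_apply, frobeniusInner_wedge,
    huu, hvv, huv, hvu, smul_eq_mul, Finset.mul_sum]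
  refine Finset.sum_congr rfl fun k _ => ?_
  simp only [mul_zero, sub_zero, mul_ite, mul_one, Finset.sum_ite_eq', Finset.mem_univ,
    ↓reduceIte, sq]
  ring

theorem curvPairing_sum_wedge {A : Fin n → Fin n → Fin n → Fin n → ℝ}
    (hR : IsCurvatureForm (curvForm A)) {m : ℕ} (u v : Fin m → EuclideanSpace ℝ (Fin n))
    (lam : Fin m → ℝ) :
    curvPairing A (∑ k, lam k • wedge (u k) (v k)) (∑ k, lam k • wedge (u k) (v k)) =
      4 * ∑ k, ∑ l, lam k * lam l * curvForm A (u k) (v k) (u l) (v l) := by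
  simp only [map_sum, map_smul, LinearMap.sum_apply, LinearMap.smul_apply, curvPairing_wedge hR,
    smul_eq_mul, Finset.mul_sum]
  rw [Finset.sum_comm]
  refine Finset.sum_congr rfl fun k _ => Finset.sum_congr rfl fun l _ => ?_
  ring

theorem curvPairing_self_of_eigen {A : Fin n → Fin n → Fin n → Fin n → ℝ}
    {β : Fin n → Fin n → ℝ} {μ : ℝ} (heig : ∀ i j, ∑ p, ∑ q, A i j p q * β p q = μ * β i j) :
    curvPairing A β β = μ * frobeniusInner β β := by
  simp only [curvPairing, frobeniusInner, LinearMap.mk₂_apply, Finset.mul_sum]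
  refine Finset.sum_congr rfl fun i _ => Finset.sum_congr rfl fun j _ => ?_
  calc _ = β i j * ∑ p, ∑ q, A i j p q * β p q := by
        simp only [Finset.mul_sum]
        exact Finset.sum_congr rfl fun p _ => Finset.sum_congr rfl fun q _ => by ring
    _ = _ := by rw [heig]; ring

end Coordinates

theorem Rhat_eigenvalue_estimate_general
    (n : ℕ)
    (A : Fin n → Fin n → Fin n → Fin n → ℝ) (δ Δ : ℝ)
    (hA1 : ∀ i j p q, A i j p q = - A j i p q)
    (hA2 : ∀ i j p q, A i j p q = - A i j q p)
    (hBianchi : ∀ i j p q, A i j p q + A p i j q + A j p i q = 0)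
    (hsec : ∀ X Y : EuclideanSpace ℝ (Fin n),
      ‖X‖ ^ 2 * ‖Y‖ ^ 2 - ⟪X, Y⟫_ℝ ^ 2 = 1 →
      δ ≤ (∑ i, ∑ j, ∑ p, ∑ q, A i j p q * X i * Y j * Y p * X q) ∧
      (∑ i, ∑ j, ∑ p, ∑ q, A i j p q * X i * Y j * Y p * X q) ≤ Δ)
    (β : Fin n → Fin n → ℝ) (μ : ℝ)
    (hβ_skew : ∀ i j, β i j = - β j i)
    (hβ_ne : β ≠ 0)
    (heig : ∀ i j, ∑ p, ∑ q, A i j p q * β p q = μ * β i j) :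
    |μ + (Δ + δ)| ≤ ((4 * ((n / 2 : ℕ) : ℝ) - 1) / 3) * (Δ - δ) := by
  obtain ⟨m, u, v, lam, hON, hβ⟩ := exists_eq_sum_wedge hβ_skew
  have hR := isCurvatureForm_curvForm hA1 hA2 hBianchi
  have hK : SectionalCurvatureBetween (curvForm A) δ Δ :=
    .of_area_eq_one fun X Y h => by simpa only [curvForm_apply] using hsec X Y h
  have hS : 0 < ∑ k, lam k ^ 2 := by
    refine (Finset.sum_nonneg fun k _ => sq_nonneg (lam k)).lt_of_ne fun h => hβ_ne ?_
    have hlam k : lam k = 0 :=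
      pow_eq_zero_iff two_ne_zero |>.1 <| (Finset.sum_eq_zero_iff_of_nonneg
        fun k _ => sq_nonneg (lam k)).1 h.symm k (Finset.mem_univ k)
    simp [hβ, hlam]
  have hsum : ∑ k, ∑ l, lam k * lam l * curvForm A (u k) (v k) (u l) (v l) =
      μ / 2 * ∑ k, lam k ^ 2 := by
    have := curvPairing_self_of_eigen heig
    rw [hβ, curvPairing_sum_wedge hR, frobeniusInner_sum_wedge hON] at this
    linarith
  have key := hK.abs_sum_add_le_finrank hR hON lam
  rw [hsum, finrank_euclideanSpace_fin, ← add_mul, abs_mul, abs_of_pos hS] at key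
  have := le_of_mul_le_mul_right key hS
  rw [← add_div, abs_div, abs_two] at this
  linarith

theorem Rhat_eigenvalue_estimate
    (n : ℕ)
    (A : Fin n → Fin n → Fin n → Fin n → ℝ) (δ Δ : ℝ)
    (hA1 : ∀ i j p q, A i j p q = - A j i p q)
    (hA2 : ∀ i j p q, A i j p q = - A i j q p)
    (hA3 : ∀ i j p q, A i j p q = A p q i j)
    (hBianchi : ∀ i j p q, A i j p q + A p i j q + A j p i q = 0)
    (hsec : ∀ X Y : EuclideanSpace ℝ (Fin n),
      ‖X‖ ^ 2 * ‖Y‖ ^ 2 - ⟪X, Y⟫_ℝ ^ 2 = 1 →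
      δ ≤ (∑ i, ∑ j, ∑ p, ∑ q, A i j p q * X i * Y j * Y p * X q) ∧
      (∑ i, ∑ j, ∑ p, ∑ q, A i j p q * X i * Y j * Y p * X q) ≤ Δ)
    (β : Fin n → Fin n → ℝ) (μ : ℝ)
    (hβ_skew : ∀ i j, β i j = - β j i)
    (hβ_ne : β ≠ 0)
    (heig : ∀ i j, ∑ p, ∑ q, A i j p q * β p q = μ * β i j) :
    |μ + (Δ + δ)| ≤ ((4 * ((n / 2 : ℕ) : ℝ) - 1) / 3) * (Δ - δ) :=
  Rhat_eigenvalue_estimate_general n A δ Δ hA1 hA2 hBianchi hsec β μ hβ_skew hβ_ne heig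
end

section
/- Let A be an algebraic curvature tensor on ℝⁿ with δ ≤ R̄ ≤ Δ. If h = (h_{ij}) is a nonzero symmetric array and r₀ ∈ ℝ satisfies ∑_{k,l} A_{kilj} h_{kl} − ((δ+Δ)/2)(h_{ij} − (∑_m h_{mm}) δ_{ij}) = r₀ h_{ij} for all i, j (i.e. h is an eigenvector of R̊₀ = R̊ − ((δ+Δ)/4)(g⊼g)̊ on symmetric 2-tensors with eigenvalue r₀), then |r₀| ≤ ((n−1)/2)(Δ − δ). -/
open scoped BigOperators InnerProductSpace

/-!
Diagonalize `h = ∑ₐ μₐ vₐ ⊗ vₐ` in an orthonormal eigenbasis. Pairing the eigenvalue equation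
with `h` gives `r₀ |h|² = ∑ₐ ∑_b μₐ μ_b ⟪R̊₀(vₐ ⊗ vₐ), v_b ⊗ v_b⟫`, and
`⟪R̊₀(X ⊗ X), Y ⊗ Y⟫ = c (|X|²|Y|² - ⟪X, Y⟫²) - R(X, Y, Y, X)` with `c = (δ + Δ)/2`. This vanishes
for `a = b` and, since `vₐ, v_b` span a unit-area plane, lies in `[-(Δ - δ)/2, (Δ - δ)/2]` for
`a ≠ b`. Finally `∑_{a ≠ b} |μₐ| |μ_b| ≤ (n - 1) ∑ₐ μₐ²` by `2|μₐ||μ_b| ≤ μₐ² + μ_b²`.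
-/

theorem LinearMap.sum_smul_sum_smul {ι R M : Type*} [Fintype ι] [CommSemiring R]
    [AddCommMonoid M] [Module R M] (B : M →ₗ[R] M →ₗ[R] R) (μ : ι → R) (x : ι → M) :
    B (∑ a, μ a • x a) (∑ b, μ b • x b) = ∑ a, ∑ b, μ a * μ b * B (x a) (x b) := by
  simp only [map_sum, LinearMap.sum_apply, map_smul, LinearMap.smul_apply, smul_eq_mul,
    Finset.mul_sum]
  rw [Finset.sum_comm]
  exact Finset.sum_congr rfl fun a _ => Finset.sum_congr rfl fun b _ => by ring

section

variable {ι : Type*} [Fintype ι]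

theorem sum_sum_eq_zero_of_antisymm (f : ι → ι → ℝ) (hf : ∀ i j, f i j = -f j i) :
    ∑ i, ∑ j, f i j = 0 := by
  have hswap : ∑ i, ∑ j, f i j = ∑ i, ∑ j, -f i j := by
    rw [Finset.sum_comm]
    exact Finset.sum_congr rfl fun j _ => Finset.sum_congr rfl fun i _ => hf i j
  simp only [Finset.sum_neg_distrib] at hswap
  linarith

theorem abs_sum_sum_mul_mul_le (μ : ι → ℝ) (G : ι → ι → ℝ) (K : ℝ)
    (hdiag : ∀ a, G a a = 0) (hoff : ∀ a b, a ≠ b → |G a b| ≤ K) :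
    |∑ a, ∑ b, μ a * μ b * G a b| ≤ K * (Fintype.card ι - 1) * ∑ a, μ a ^ 2 := by
  classical
  have hterm : ∀ a b, |μ a * μ b * G a b| ≤
      K * ((μ a ^ 2 + μ b ^ 2) / 2) - if a = b then K * μ a ^ 2 else 0 := by
    intro a b
    split_ifs with hab
    · subst hab
      simp [hdiag]
    · have hK : 0 ≤ K := (abs_nonneg _).trans (hoff a b hab)
      calc |μ a * μ b * G a b| = |μ a| * |μ b| * |G a b| := by rw [abs_mul, abs_mul]
        _ ≤ |μ a| * |μ b| * K := by gcongr; exact hoff a b hab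
        _ ≤ (μ a ^ 2 + μ b ^ 2) / 2 * K := by
          gcongr
          nlinarith [two_mul_le_add_sq |μ a| |μ b|, sq_abs (μ a), sq_abs (μ b)]
        _ = _ := by ring
  calc |∑ a, ∑ b, μ a * μ b * G a b| ≤ ∑ a, ∑ b, |μ a * μ b * G a b| :=
        (Finset.abs_sum_le_sum_abs _ _).trans
          (Finset.sum_le_sum fun a _ => Finset.abs_sum_le_sum_abs _ _)
    _ ≤ ∑ a, ∑ b, (K * ((μ a ^ 2 + μ b ^ 2) / 2) - if a = b then K * μ a ^ 2 else 0) :=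
        Finset.sum_le_sum fun a _ => Finset.sum_le_sum fun b _ => hterm a b
    _ = K * (Fintype.card ι - 1) * ∑ a, μ a ^ 2 := by
        simp only [Finset.sum_sub_distrib, Finset.sum_add_distrib, Finset.sum_ite_eq,
          Finset.mem_univ, if_true, ← Finset.mul_sum, ← Finset.sum_div, Finset.sum_const,
          Finset.card_univ, nsmul_eq_mul]
        ring

theorem exists_orthonormalBasis_eq_sum_rankOne (h : ι → ι → ℝ) (hsymm : ∀ i j, h i j = h j i) :
    ∃ (μ : ι → ℝ) (v : OrthonormalBasis ι ℝ (EuclideanSpace ℝ ι)),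
      h = ∑ a, μ a • fun i j => v a i * v a j := by
  classical
  have hM : (Matrix.of h).IsHermitian := by
    ext i j
    simp [hsymm j i]
  refine ⟨hM.eigenvalues, hM.eigenvectorBasis, ?_⟩
  conv_lhs => rw [show h = Matrix.of h from rfl, hM.spectral_theorem]
  ext p q
  simp only [Unitary.conjStarAlgAut_apply, Matrix.mul_apply, Matrix.diagonal_apply,
    Matrix.IsHermitian.eigenvectorUnitary_apply, Matrix.star_apply, star_trivial,
    RCLike.ofReal_real_eq_id, Function.comp_apply, id_eq, mul_ite, mul_zero, Finset.sum_ite_eq',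
    Finset.mem_univ, if_true, Finset.sum_apply, Pi.smul_apply, smul_eq_mul]
  exact Finset.sum_congr rfl fun a _ => by ring

def frobeniusPairing : (ι → ι → ℝ) →ₗ[ℝ] (ι → ι → ℝ) →ₗ[ℝ] ℝ :=
  LinearMap.mk₂ ℝ (fun h k => ∑ i, ∑ j, h i j * k i j)
    (fun _ _ _ => by simp only [Pi.add_apply, add_mul, Finset.sum_add_distrib])
    (fun _ _ _ => by simp only [Pi.smul_apply, smul_eq_mul, mul_assoc, Finset.mul_sum])
    (fun _ _ _ => by simp only [Pi.add_apply, mul_add, Finset.sum_add_distrib])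
    (fun _ _ _ => by simp only [Pi.smul_apply, smul_eq_mul, mul_left_comm, Finset.mul_sum])

theorem frobeniusPairing_rankOne (X Y : EuclideanSpace ℝ ι) :
    frobeniusPairing (fun i j => X i * X j) (fun i j => Y i * Y j) = ⟪X, Y⟫_ℝ ^ 2 := by
  simp only [frobeniusPairing, LinearMap.mk₂_apply, PiLp.inner_apply,
    RCLike.inner_apply, conj_trivial, sq, Finset.sum_mul_sum]
  exact Finset.sum_congr rfl fun i _ => Finset.sum_congr rfl fun j _ => by ring

theorem frobeniusPairing_sum_rankOne (v : OrthonormalBasis ι ℝ (EuclideanSpace ℝ ι))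
    (μ : ι → ℝ) :
    frobeniusPairing (∑ a, μ a • fun i j => v a i * v a j) (∑ a, μ a • fun i j => v a i * v a j)
      = ∑ a, μ a ^ 2 := by
  classical
  rw [LinearMap.sum_smul_sum_smul]
  simp [frobeniusPairing_rankOne, orthonormal_iff_ite.mp v.orthonormal, sq]

def curvatureForm (A : ι → ι → ι → ι → ℝ) (X Y : ι → ℝ) : ℝ :=
  ∑ i, ∑ j, ∑ p, ∑ q, A i j p q * X i * Y j * Y p * X q

theorem curvatureForm_self {A : ι → ι → ι → ι → ℝ} (hA : ∀ i j p q, A i j p q = - A j i p q)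
    (X : ι → ℝ) : curvatureForm A X X = 0 := by
  refine sum_sum_eq_zero_of_antisymm _ fun i j => ?_
  simp only [hA i j, neg_mul, Finset.sum_neg_distrib, mul_right_comm _ (X i) (X j)]

/-- `R̊ - (c/2) (g ⊼ g)̊`; the paper's `R̊₀` is the case `c = (δ + Δ)/2`. -/
def shiftedRcirc [DecidableEq ι] (A : ι → ι → ι → ι → ℝ) (c : ℝ) :
    (ι → ι → ℝ) →ₗ[ℝ] (ι → ι → ℝ) where
  toFun h i j :=
    (∑ p, ∑ q, A p i q j * h p q) - c * (h i j - (∑ m, h m m) * if i = j then 1 else 0)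
  map_add' h k := by
    ext i j
    simp only [Pi.add_apply, mul_add, Finset.sum_add_distrib]
    ring
  map_smul' r h := by
    ext i j
    simp only [Pi.smul_apply, smul_eq_mul, RingHom.id_apply, ← Finset.mul_sum,
      mul_left_comm _ r]
    ring

theorem frobeniusPairing_shiftedRcirc_rankOne [DecidableEq ι] {A : ι → ι → ι → ι → ℝ}
    (hA : ∀ i j p q, A i j p q = - A i j q p) (c : ℝ) (X Y : EuclideanSpace ℝ ι) :
    frobeniusPairing (shiftedRcirc A c fun i j => X i * X j) (fun i j => Y i * Y j)
      = c * (‖X‖ ^ 2 * ‖Y‖ ^ 2 - ⟪X, Y⟫_ℝ ^ 2) - curvatureForm A X Y := by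
  have hR : ∑ i, ∑ j, (∑ p, ∑ q, A p i q j * (X p * X q)) * (Y i * Y j)
      = -curvatureForm A X Y := by
    calc ∑ i, ∑ j, (∑ p, ∑ q, A p i q j * (X p * X q)) * (Y i * Y j)
        = ∑ i, ∑ j, ∑ p, ∑ q, A p i q j * X p * Y i * Y j * X q := by
          simp only [Finset.sum_mul]
          exact Finset.sum_congr rfl fun i _ => Finset.sum_congr rfl fun j _ =>
            Finset.sum_congr rfl fun p _ => Finset.sum_congr rfl fun q _ => by ring
      _ = ∑ p, ∑ i, ∑ j, ∑ q, A p i q j * X p * Y i * Y j * X q :=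
          (Finset.sum_congr rfl fun i _ => Finset.sum_comm).trans Finset.sum_comm
      _ = -curvatureForm A X Y := by
          simp only [curvatureForm, ← Finset.sum_neg_distrib]
          exact Finset.sum_congr rfl fun p _ => Finset.sum_congr rfl fun i _ =>
            Finset.sum_congr rfl fun j _ => Finset.sum_congr rfl fun q _ => by
              rw [hA p i q j]; ring
  have hg : ∑ i, ∑ j, (X i * X j - (∑ m, X m * X m) * if i = j then 1 else 0) * (Y i * Y j)
      = ⟪X, Y⟫_ℝ ^ 2 - ‖X‖ ^ 2 * ‖Y‖ ^ 2 := by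
    have hinner : ⟪X, Y⟫_ℝ = ∑ i, X i * Y i := by
      simp only [PiLp.inner_apply, RCLike.inner_apply, conj_trivial, mul_comm]
    rw [hinner, EuclideanSpace.real_norm_sq_eq, EuclideanSpace.real_norm_sq_eq]
    simp only [sq, Finset.sum_mul_sum, sub_mul, Finset.sum_sub_distrib, mul_ite, ite_mul, mul_one,
      mul_zero, zero_mul, Finset.sum_ite_eq, Finset.mem_univ, if_true]
    congr 1
    · exact Finset.sum_congr rfl fun i _ => Finset.sum_congr rfl fun j _ => by ring
    · rw [← Finset.mul_sum, Finset.sum_mul_sum]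
  simp only [frobeniusPairing, shiftedRcirc, LinearMap.mk₂_apply, LinearMap.coe_mk,
    AddHom.coe_mk, sub_mul, Finset.sum_sub_distrib]
  simp only [mul_assoc c, ← Finset.mul_sum, hR, hg]
  ring

end

theorem Rcirc0_eigenvalue_estimate_general
    (n : ℕ)
    (A : Fin n → Fin n → Fin n → Fin n → ℝ) (δ Δ : ℝ)
    (hA1 : ∀ i j p q, A i j p q = - A j i p q)
    (hA2 : ∀ i j p q, A i j p q = - A i j q p)
    (hsec : ∀ X Y : EuclideanSpace ℝ (Fin n),
      ‖X‖ ^ 2 * ‖Y‖ ^ 2 - ⟪X, Y⟫_ℝ ^ 2 = 1 →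
      δ ≤ (∑ i, ∑ j, ∑ p, ∑ q, A i j p q * X i * Y j * Y p * X q) ∧
      (∑ i, ∑ j, ∑ p, ∑ q, A i j p q * X i * Y j * Y p * X q) ≤ Δ)
    (h : Fin n → Fin n → ℝ) (r₀ : ℝ)
    (hsymm : ∀ i j, h i j = h j i)
    (h_ne : h ≠ 0)
    (heig : ∀ i j,
      (∑ p, ∑ q, A p i q j * h p q)
        - ((δ + Δ) / 2) * (h i j - (∑ m, h m m) * (if i = j then (1 : ℝ) else 0))
        = r₀ * h i j) :
    |r₀| ≤ (((n : ℝ) - 1) / 2) * (Δ - δ) := by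
  obtain ⟨μ, v, hdecomp⟩ := exists_orthonormalBasis_eq_sum_rankOne h hsymm
  set B := frobeniusPairing.comp (shiftedRcirc A ((δ + Δ) / 2))
  set G := fun a b => B (fun i j => v a i * v a j) (fun i j => v b i * v b j)
  have hinner : ∀ a b, ⟪v a, v b⟫_ℝ = if a = b then 1 else 0 :=
    orthonormal_iff_ite.mp v.orthonormal
  have hdiag : ∀ a, G a a = 0 := fun a => by
    simp [G, B, frobeniusPairing_shiftedRcirc_rankOne hA2, curvatureForm_self hA1, hinner]
  have hoff : ∀ a b, a ≠ b → |G a b| ≤ (Δ - δ) / 2 := fun a b hab => by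
    have hplane : ‖v a‖ ^ 2 * ‖v b‖ ^ 2 - ⟪v a, v b⟫_ℝ ^ 2 = 1 := by simp [hinner, hab]
    obtain ⟨hlo, hhi⟩ := hsec (v a) (v b) hplane
    simp only [G, B, LinearMap.comp_apply, frobeniusPairing_shiftedRcirc_rankOne hA2, hplane]
    rw [abs_le]
    constructor <;> unfold curvatureForm <;> linarith
  have hB : B h h = r₀ * frobeniusPairing h h := by
    rw [LinearMap.comp_apply, show shiftedRcirc A _ h = r₀ • h from funext₂ heig, map_smul,
      LinearMap.smul_apply, smul_eq_mul]
  have hN : frobeniusPairing h h = ∑ a, μ a ^ 2 := hdecomp ▸ frobeniusPairing_sum_rankOne v μ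
  have hpos : 0 < ∑ a, μ a ^ 2 := by
    obtain ⟨a, ha⟩ : ∃ a, μ a ≠ 0 := by
      by_contra! hμ
      exact h_ne (by simp [hdecomp, hμ])
    exact Finset.sum_pos' (fun _ _ => sq_nonneg _) ⟨a, Finset.mem_univ _, by positivity⟩
  have hest := abs_sum_sum_mul_mul_le μ G _ hdiag hoff
  rw [← LinearMap.sum_smul_sum_smul, ← hdecomp, hB, hN, abs_mul, abs_of_pos hpos,
    Fintype.card_fin] at hest
  calc |r₀| ≤ (Δ - δ) / 2 * (n - 1) := le_of_mul_le_mul_right hest hpos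
    _ = ((n - 1) / 2) * (Δ - δ) := by ring

theorem Rcirc0_eigenvalue_estimate
    (n : ℕ)
    (A : Fin n → Fin n → Fin n → Fin n → ℝ) (δ Δ : ℝ)
    (hA1 : ∀ i j p q, A i j p q = - A j i p q)
    (hA2 : ∀ i j p q, A i j p q = - A i j q p)
    (hA3 : ∀ i j p q, A i j p q = A p q i j)
    (hBianchi : ∀ i j p q, A i j p q + A p i j q + A j p i q = 0)
    (hsec : ∀ X Y : EuclideanSpace ℝ (Fin n),
      ‖X‖ ^ 2 * ‖Y‖ ^ 2 - ⟪X, Y⟫_ℝ ^ 2 = 1 →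
      δ ≤ (∑ i, ∑ j, ∑ p, ∑ q, A i j p q * X i * Y j * Y p * X q) ∧
      (∑ i, ∑ j, ∑ p, ∑ q, A i j p q * X i * Y j * Y p * X q) ≤ Δ)
    (h : Fin n → Fin n → ℝ) (r₀ : ℝ)
    (hsymm : ∀ i j, h i j = h j i)
    (h_ne : h ≠ 0)
    (heig : ∀ i j,
      (∑ p, ∑ q, A p i q j * h p q)
        - ((δ + Δ) / 2) * (h i j - (∑ m, h m m) * (if i = j then (1 : ℝ) else 0))
        = r₀ * h i j) :
    |r₀| ≤ (((n : ℝ) - 1) / 2) * (Δ - δ) :=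
  Rcirc0_eigenvalue_estimate_general n A δ Δ hA1 hA2 hsec h r₀ hsymm h_ne heig
end

section
/- Let ω = (ω_{ij}) be a skew-symmetric array on ℝ⁶ with ∑_k ω_{ik}ω_{jk} = δ_{ij}, and set (⋆ω)_{ijkl} = ω_{ij}ω_{kl} + ω_{jk}ω_{il} + ω_{lj}ω_{ik}. Let W = (W_{ijkl}) be an algebraic curvature tensor that is Ricci-traceless (∑_k W_{kijk} = 0 for all i, j) and lies in Ω²₈ in its last two (equivalently, by pair symmetry, its first two) indices: ∑_{k,l} W_{ijkl}ω_{kl} = 0 and (1/2)∑_{u,v} W_{ijuv}(⋆ω)_{uvkl} = −W_{ijkl} for all i, j, k, l. Let h = (h_{ij}) be symmetric with ∑_i h_{ii} = 0 and commuting with ω (∑_p h_{ip}ω_{pj} = ∑_p ω_{ip}h_{pj} for all i, j). Then ∑_{u,v} W_{abuv}(h ⋄ ω)_{uv} = ((2 W̊h) ⋄ ω)_{ab} for all a, b, where (W̊h)_{ij} = ∑_{k,l} W_{kilj}h_{kl}; that is, the curvature operator Ŵ maps h ⋄ ω to (2 W̊h) ⋄ ω. -/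
/-!
Put `K = W̊h`. Summing the first Bianchi identity against a 2-tensor `M` gives
`Ŵ M = W̊M - (W̊M)ᵀ`. The `Ω²₈` conditions say that each 2-form `W_{ij··}` is `ω`-invariant,
`ωᵀ W_{ij··} ω = W_{ij··}`; as `ω` is orthogonal, `ωᵀ` then commutes with every `W_{··kl}`,
and this is exactly what makes `W̊(ωh) = ω W̊h`. Since `h` is symmetric and commutes with `ω`,
`h ⋄ ω = 2ωh`, hence `Ŵ(h ⋄ ω) = 2(ωK - (ωK)ᵀ) = 2(ωK + Kω) = (2K) ⋄ ω`, because `K` is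
symmetric and `ω` skew.
-/

open Finset Matrix

namespace AlgebraicCurvatureTensor

section CommRing

variable {ι R : Type*} [Fintype ι] [CommRing R]

def diamond (h ω : Matrix ι ι R) : Matrix ι ι R :=
  of fun i j => ∑ p, (h i p * ω p j + h j p * ω i p)

-- `curvatureOperator W` is `Ŵ`, `curvatureOperatorSecondKind W` is `W̊` and `starOmega ω` is `⋆ω`.
def curvatureOperator (W : ι → ι → ι → ι → R) (M : Matrix ι ι R) : Matrix ι ι R :=
  of fun a b => ∑ u, ∑ v, W a b u v * M u v

def curvatureOperatorSecondKind (W : ι → ι → ι → ι → R) (h : Matrix ι ι R) :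
    Matrix ι ι R :=
  of fun i j => ∑ k, ∑ l, W k i l j * h k l

def starOmega (ω : Matrix ι ι R) (i j k l : ι) : R :=
  ω i j * ω k l + ω j k * ω i l + ω l j * ω i k

theorem diamond_eq (h ω : Matrix ι ι R) : diamond h ω = h * ω + ω * hᵀ := by
  ext i j
  simp [diamond, mul_apply, sum_add_distrib, mul_comm]

theorem diamond_eq_two_smul_mul {h ω : Matrix ι ι R} (hh : h.IsSymm) (hc : Commute h ω) :
    diamond h ω = (2 : R) • (ω * h) := by
  rw [diamond_eq, hh.eq, hc.eq, two_smul]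

theorem curvatureOperator_smul (W : ι → ι → ι → ι → R) (c : R) (M : Matrix ι ι R) :
    curvatureOperator W (c • M) = c • curvatureOperator W M := by
  ext a b
  simp only [curvatureOperator, of_apply, Matrix.smul_apply, smul_eq_mul, mul_sum]
  exact sum_congr rfl fun _ _ => sum_congr rfl fun _ _ => by ring

theorem curvatureOperator_eq_sub_transpose {W : ι → ι → ι → ι → R}
    (hW1 : ∀ i j k l, W i j k l = -W j i k l) (hW2 : ∀ i j k l, W i j k l = -W i j l k)
    (hB : ∀ i j k l, W i j k l + W k i j l + W j k i l = 0) (M : Matrix ι ι R) :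
    curvatureOperator W M =
      curvatureOperatorSecondKind W M - (curvatureOperatorSecondKind W M)ᵀ := by
  ext a b
  simp only [curvatureOperator, curvatureOperatorSecondKind, of_apply, Matrix.sub_apply,
    transpose_apply, ← sum_sub_distrib]
  refine sum_congr rfl fun u _ => sum_congr rfl fun v _ => ?_
  linear_combination M u v * (hB a b u v - hW2 u a b v - hW1 b u a v + hW2 u b a v)

theorem curvatureOperatorSecondKind_isSymm {W : ι → ι → ι → ι → R} {h : Matrix ι ι R}
    (hW : ∀ i j k l, W i j k l = W k l i j) (hh : h.IsSymm) :
    (curvatureOperatorSecondKind W h).IsSymm := by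
  refine IsSymm.ext fun i j => ?_
  simp only [curvatureOperatorSecondKind, of_apply]
  rw [sum_comm]
  exact sum_congr rfl fun k _ => sum_congr rfl fun l _ => by rw [hW, hh.apply]

theorem curvatureOperatorSecondKind_mul_left {W : ι → ι → ι → ι → R} {ω : Matrix ι ι R}
    (hW : ∀ k l, Commute ωᵀ (of fun i j => W i j k l)) (h : Matrix ι ι R) :
    curvatureOperatorSecondKind W (ω * h) = ω * curvatureOperatorSecondKind W h := by
  ext a b
  have hWcomm : ∀ p l, ∑ k, ω k p * W k a l b = ∑ j, W p j l b * ω a j := fun p l => by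
    simpa [mul_apply] using congrFun (congrFun (hW l b).eq p) a
  calc curvatureOperatorSecondKind W (ω * h) a b
      = ∑ p, ∑ l, (∑ k, ω k p * W k a l b) * h p l := by
        simp only [curvatureOperatorSecondKind, of_apply, mul_apply, mul_sum, sum_mul]
        rw [sum_comm_cycle]
        refine sum_congr rfl fun p _ => ?_
        rw [sum_comm]
        exact sum_congr rfl fun l _ => sum_congr rfl fun k _ => by ring
    _ = ∑ p, ∑ l, (∑ j, W p j l b * ω a j) * h p l := by simp only [hWcomm]
    _ = (ω * curvatureOperatorSecondKind W h) a b := by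
        simp only [curvatureOperatorSecondKind, of_apply, mul_apply, mul_sum, sum_mul]
        conv_rhs => rw [← sum_comm_cycle]
        exact sum_congr rfl fun p _ => sum_congr rfl fun l _ =>
          sum_congr rfl fun j _ => by ring

theorem transpose_mul_mul_apply (ω F : Matrix ι ι R) (k l : ι) :
    (ωᵀ * F * ω) k l = ∑ u, ∑ v, F u v * (ω u k * ω v l) := by
  simp only [mul_apply, transpose_apply, sum_mul]
  rw [sum_comm]
  exact sum_congr rfl fun u _ => sum_congr rfl fun v _ => by ring

theorem commute_transpose_of_transpose_mul_mul_eq [DecidableEq ι] {J A : Matrix ι ι R}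
    (hJ : J * Jᵀ = 1) (hA : Jᵀ * A * J = A) : Commute Jᵀ A :=
  calc Jᵀ * A = Jᵀ * A * (J * Jᵀ) := by rw [hJ, Matrix.mul_one]
    _ = A * Jᵀ := by rw [← Matrix.mul_assoc, hA]

end CommRing

section Field

variable {ι 𝕜 : Type*} [Fintype ι] [Field 𝕜] [CharZero 𝕜]

theorem transpose_mul_mul_eq_of_starOmega {F ω : Matrix ι ι 𝕜} (hF : Fᵀ = -F)
    (hω : ωᵀ = -ω) (hFω : ∑ k, ∑ l, F k l * ω k l = 0)
    (h8 : ∀ k l, (1 / 2 : 𝕜) * ∑ u, ∑ v, F u v * starOmega ω u v k l = -F k l) :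
    ωᵀ * F * ω = F := by
  set G := ωᵀ * F * ω
  have hG : ∀ i j, G i j = -G j i := fun i j => by
    have : Gᵀ = -G := by
      simp only [G, transpose_mul, transpose_transpose, hF, Matrix.mul_neg, Matrix.neg_mul,
        Matrix.mul_assoc]
    exact congrFun (congrFun this j) i
  have hω' : ∀ i j, ω i j = -ω j i := fun i j => congrFun (congrFun hω j) i
  ext k l
  have hsplit : ∑ u, ∑ v, F u v * starOmega ω u v k l
      = (∑ u, ∑ v, F u v * ω u v) * ω k l + G l k - G k l := by
    simp only [G, starOmega, transpose_mul_mul_apply, mul_add, sum_add_distrib, sum_mul,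
      sub_eq_add_neg, ← sum_neg_distrib]
    congr 1
    congr 1
    · exact sum_congr rfl fun u _ => sum_congr rfl fun v _ => by ring
    · exact sum_congr rfl fun u _ => sum_congr rfl fun v _ => by ring
    · exact sum_congr rfl fun u _ => sum_congr rfl fun v _ => by rw [hω' l v]; ring
  have h := h8 k l
  rw [hsplit, hFω] at h
  linear_combination (1 / 2 : 𝕜) * hG l k - h

variable [DecidableEq ι] {W : ι → ι → ι → ι → 𝕜} {ω : Matrix ι ι 𝕜}

theorem commute_transpose_of_starOmega (hω : ωᵀ = -ω) (hω_orth : ω * ωᵀ = 1)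
    (hW2 : ∀ i j k l, W i j k l = -W i j l k) (hW3 : ∀ i j k l, W i j k l = W k l i j)
    (hWω : ∀ i j, ∑ k, ∑ l, W i j k l * ω k l = 0)
    (hW8 : ∀ i j k l, (1 / 2 : 𝕜) * ∑ u, ∑ v, W i j u v * starOmega ω u v k l = -W i j k l)
    (k l : ι) : Commute ωᵀ (of fun i j => W i j k l) := by
  have hpair : (of fun i j => W i j k l) = W k l := ext fun i j => hW3 i j k l
  rw [hpair]
  exact commute_transpose_of_transpose_mul_mul_eq hω_orth
    (transpose_mul_mul_eq_of_starOmega (ext fun u v => hW2 k l v u) hω (hWω k l) (hW8 k l))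

theorem curvatureOperator_diamond {h : Matrix ι ι 𝕜} (hω : ωᵀ = -ω)
    (hω_orth : ω * ωᵀ = 1)
    (hW1 : ∀ i j k l, W i j k l = -W j i k l) (hW2 : ∀ i j k l, W i j k l = -W i j l k)
    (hW3 : ∀ i j k l, W i j k l = W k l i j)
    (hB : ∀ i j k l, W i j k l + W k i j l + W j k i l = 0)
    (hWω : ∀ i j, ∑ k, ∑ l, W i j k l * ω k l = 0)
    (hW8 : ∀ i j k l, (1 / 2 : 𝕜) * ∑ u, ∑ v, W i j u v * starOmega ω u v k l = -W i j k l)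
    (hh : h.IsSymm) (hc : Commute h ω) :
    curvatureOperator W (diamond h ω) =
      diamond ((2 : 𝕜) • curvatureOperatorSecondKind W h) ω := by
  have hK := curvatureOperatorSecondKind_isSymm hW3 hh
  rw [diamond_eq_two_smul_mul hh hc, curvatureOperator_smul,
    curvatureOperator_eq_sub_transpose hW1 hW2 hB,
    curvatureOperatorSecondKind_mul_left
      (commute_transpose_of_starOmega hω hω_orth hW2 hW3 hWω hW8),
    diamond_eq, transpose_mul, transpose_smul, hK.eq, hω, Matrix.mul_neg, sub_neg_eq_add,
    Matrix.smul_mul, Matrix.mul_smul, smul_add, add_comm]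

end Field

end AlgebraicCurvatureTensor

-- The claim is `curvatureOperator_diamond` read entrywise, with the definitions unfolded.
open AlgebraicCurvatureTensor Matrix in
theorem What_on_diamond_eq_two_Wcirc_diamond_general
    (ω : Fin 6 → Fin 6 → ℝ)
    (W : Fin 6 → Fin 6 → Fin 6 → Fin 6 → ℝ)
    (h : Fin 6 → Fin 6 → ℝ)
    (hω_skew : ∀ i j, ω i j = - ω j i)
    (hω_unit : ∀ i j, ∑ k, ω i k * ω j k = if i = j then (1 : ℝ) else 0)
    (hW1 : ∀ i j p q, W i j p q = - W j i p q)
    (hW2 : ∀ i j p q, W i j p q = - W i j q p)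
    (hW3 : ∀ i j p q, W i j p q = W p q i j)
    (hBianchi : ∀ i j p q, W i j p q + W p i j q + W j p i q = 0)
    (hWω : ∀ i j, ∑ k, ∑ l, W i j k l * ω k l = 0)
    (hW8 : ∀ i j k l, (1 / 2 : ℝ) * (∑ u, ∑ v, W i j u v *
        (ω u v * ω k l + ω v k * ω u l + ω l v * ω u k)) = - W i j k l)
    (hsymm : ∀ i j, h i j = h j i)
    (hcomm : ∀ i j, ∑ p, h i p * ω p j = ∑ p, ω i p * h p j) :
    ∀ a b, ∑ u, ∑ v, W a b u v * (∑ p, (h u p * ω p v + h v p * ω u p)) =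
      ∑ p, ((2 * ∑ k, ∑ l, W k a l p * h k l) * ω p b
          + (2 * ∑ k, ∑ l, W k b l p * h k l) * ω a p) := fun a b =>
  congrFun (congrFun (curvatureOperator_diamond (ω := ω) (h := h)
    (ext fun i j => hω_skew j i) (ext hω_unit) hW1 hW2 hW3 hBianchi hWω hW8
    (IsSymm.ext fun i j => hsymm j i) (ext hcomm)) a) b

theorem What_on_diamond_eq_two_Wcirc_diamond
    (ω : Fin 6 → Fin 6 → ℝ)
    (W : Fin 6 → Fin 6 → Fin 6 → Fin 6 → ℝ)
    (h : Fin 6 → Fin 6 → ℝ)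
    (hω_skew : ∀ i j, ω i j = - ω j i)
    (hω_unit : ∀ i j, ∑ k, ω i k * ω j k = if i = j then (1 : ℝ) else 0)
    (hW1 : ∀ i j p q, W i j p q = - W j i p q)
    (hW2 : ∀ i j p q, W i j p q = - W i j q p)
    (hW3 : ∀ i j p q, W i j p q = W p q i j)
    (hBianchi : ∀ i j p q, W i j p q + W p i j q + W j p i q = 0)
    (hRic : ∀ i j, ∑ k, W k i j k = 0)
    (hWω : ∀ i j, ∑ k, ∑ l, W i j k l * ω k l = 0)
    (hW8 : ∀ i j k l, (1 / 2 : ℝ) * (∑ u, ∑ v, W i j u v *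
        (ω u v * ω k l + ω v k * ω u l + ω l v * ω u k)) = - W i j k l)
    (hsymm : ∀ i j, h i j = h j i)
    (htr : ∑ i, h i i = 0)
    (hcomm : ∀ i j, ∑ p, h i p * ω p j = ∑ p, ω i p * h p j) :
    ∀ a b, ∑ u, ∑ v, W a b u v * (∑ p, (h u p * ω p v + h v p * ω u p)) =
      ∑ p, ((2 * ∑ k, ∑ l, W k a l p * h k l) * ω p b
          + (2 * ∑ k, ∑ l, W k b l p * h k l) * ω a p) :=
  What_on_diamond_eq_two_Wcirc_diamond_general ω W h hω_skew hω_unit hW1 hW2 hW3 hBianchi hWω hW8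
    hsymm hcomm
end

section
/- On ℝ⁷, let φ, ψ satisfy the G2 contraction identities, and let W = (W_{ijkl}) be an algebraic curvature tensor that is Ricci-traceless (∑_k W_{kijk} = 0 for all i, j) and lies in Ω²₁₄ in each index pair: ∑_{k,l} W_{ijkl}φ_{klm} = 0 and ∑_{k,l} W_{ijkl}ψ_{kluv} = 2 W_{ijuv} for all indices. Let h = (h_{ij}) be symmetric, let β = h ⋄ φ, and define the 3-form γ_{abc} = ∑_{p,u} (W_{abpu}β_{puc} + W_{acpu}β_{pbu} + W_{bcpu}β_{apu}) (the Weyl-curvature term of the Weitzenböck formula on 3-forms). Then ∑_{b,c} γ_{abc}φ_{tbc} = 8 (W̊h)_{at} for all a, t, where (W̊h)_{ij} = ∑_{k,l} W_{kilj}h_{kl}. -/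
/-!
Because `β = h ⋄ φ` is a 3-form and `W` lies in `Ω²₁₄` in its first index pair, the second term
of `γ` contributes as much as the first and the third contributes nothing. In `∑ W_{abpu} β_{puc}`
the `h`-term on `c` dies (again `Ω²₁₄`) and the two on `p`, `u` agree, so the contraction is
`4 ∑ W_{abpu} h_{pq} φ_{quc} φ_{tbc}`. The `φφ` identity splits this into a Ricci trace (zero),
a `δδ` term equal to `W̊h`, and a `ψ` term which, by Bianchi and `Ω²₁₄` in the second pair, is
again `W̊h`.
-/

open Finset

/-- Kronecker delta on `Fin 7`. -/
noncomputable def kd7 (i j : Fin 7) : ℝ := if i = j then 1 else 0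

theorem sum_sum_comm_sum_sum {α β γ δ M : Type*} [Fintype α] [Fintype β] [Fintype γ]
    [Fintype δ] [AddCommMonoid M] (f : α → β → γ → δ → M) :
    ∑ a, ∑ b, ∑ c, ∑ d, f a b c d = ∑ c, ∑ d, ∑ a, ∑ b, f a b c d :=
  calc ∑ a, ∑ b, ∑ c, ∑ d, f a b c d
      = ∑ x : α × β, ∑ y : γ × δ, f x.1 x.2 y.1 y.2 := by simp only [Fintype.sum_prod_type]
    _ = ∑ y : γ × δ, ∑ x : α × β, f x.1 x.2 y.1 y.2 := sum_comm
    _ = ∑ c, ∑ d, ∑ a, ∑ b, f a b c d := by simp only [Fintype.sum_prod_type]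

structure IsAlgCurvatureTensor {ι : Type*} (W : ι → ι → ι → ι → ℝ) : Prop where
  antisymm_left : ∀ i j p q, W i j p q = -W j i p q
  antisymm_right : ∀ i j p q, W i j p q = -W i j q p
  pair_symm : ∀ i j p q, W i j p q = W p q i j
  bianchi : ∀ i j p q, W i j p q + W p i j q + W j p i q = 0

theorem IsAlgCurvatureTensor.sub_eq_of_bianchi {ι : Type*} {W : ι → ι → ι → ι → ℝ}
    (hW : IsAlgCurvatureTensor W) (x b p u : ι) : W x b p u - W x u p b = W x p b u := by
  have := hW.bianchi x b p u
  rw [hW.antisymm_left p x, hW.pair_symm b p, hW.antisymm_right x u] at this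
  linarith

section

variable {ι : Type*} [Fintype ι]

/-- `(W̊h)_{ij}`. -/
def curvatureAction (W : ι → ι → ι → ι → ℝ) (h : ι → ι → ℝ) (i j : ι) : ℝ :=
  ∑ k, ∑ l, W k i l j * h k l

/-- `(h ⋄ φ)_{ijk}`. -/
def diamond (h : ι → ι → ℝ) (φ : ι → ι → ι → ℝ) (i j k : ι) : ℝ :=
  ∑ p, (h i p * φ p j k + h j p * φ i p k + h k p * φ i j p)

/-- The Weyl-curvature term `γ` of the Weitzenböck formula on 3-forms. -/
def weylTerm (W : ι → ι → ι → ι → ℝ) (β : ι → ι → ι → ℝ) (a b c : ι) : ℝ :=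
  ∑ p, ∑ u, (W a b p u * β p u c + W a c p u * β p b u + W b c p u * β a p u)

theorem diamond_antisymm {φ : ι → ι → ι → ℝ} (hφ2 : ∀ i j k, φ i j k = -φ i k j)
    (h : ι → ι → ℝ) (i j k : ι) : diamond h φ i j k = -diamond h φ i k j := by
  rw [diamond, diamond, ← sum_neg_distrib]
  refine sum_congr rfl fun p _ => ?_
  rw [hφ2 p j k, hφ2 i p k, hφ2 i j p]
  ring

namespace IsAlgCurvatureTensor

variable {W : ι → ι → ι → ι → ℝ}

theorem sum_mul_psi_eq_neg (hW : IsAlgCurvatureTensor W) {ψ : ι → ι → ι → ι → ℝ}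
    (hψ1 : ∀ i j k l, ψ i j k l = -ψ j i k l) (hψ2 : ∀ i j k l, ψ i j k l = -ψ i k j l)
    (hψ3 : ∀ i j k l, ψ i j k l = -ψ i j l k) {x p s q : ι}
    (h14 : ∑ k, ∑ l, W x p k l * ψ k l s q = 2 * W x p s q) :
    ∑ b, ∑ u, W x b p u * ψ s b q u = -W x p s q := by
  -- Antisymmetrised in `b, u`, `W x b p u` becomes `W x p b u` (Bianchi), whose contraction
  -- with `ψ` is the `Ω²₁₄` condition on the second pair.
  have hswap : ∑ b, ∑ u, W x u p b * ψ s b q u = -∑ b, ∑ u, W x b p u * ψ s b q u := by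
    rw [sum_comm, ← sum_neg_distrib]
    refine sum_congr rfl fun b _ => ?_
    rw [← sum_neg_distrib]
    refine sum_congr rfl fun u _ => ?_
    rw [hψ2 s u q b, hψ3 s q u b, hψ2 s q b u]
    ring
  have hsub : ∑ b, ∑ u, (W x b p u - W x u p b) * ψ s b q u = -(2 * W x p s q) := by
    rw [← h14, ← sum_neg_distrib]
    refine sum_congr rfl fun b _ => ?_
    rw [← sum_neg_distrib]
    refine sum_congr rfl fun u _ => ?_
    rw [hW.sub_eq_of_bianchi, hψ1 s b q u, hψ2 b s q u, hψ3 b q s u, hψ2 b q u s, hψ3 b u q s]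
    ring
  simp only [sub_mul, sum_sub_distrib] at hsub
  linarith

theorem sum_mul_phi_eq_zero (hW : IsAlgCurvatureTensor W) {φ : ι → ι → ι → ℝ}
    (hφ1 : ∀ i j k, φ i j k = -φ j i k) (hφ2 : ∀ i j k, φ i j k = -φ i k j) {p u t : ι}
    (h14 : ∑ k, ∑ l, W p u k l * φ k l t = 0) :
    ∑ b, ∑ c, W b c p u * φ t b c = 0 := by
  rw [← h14]
  refine sum_congr rfl fun b _ => sum_congr rfl fun c _ => ?_
  rw [hW.pair_symm, hφ1, hφ2 b t, hφ1]
  ring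

theorem sum_mul_diamond (hW : IsAlgCurvatureTensor W) {φ : ι → ι → ι → ℝ}
    (hφ1 : ∀ i j k, φ i j k = -φ j i k) {a b : ι}
    (h14 : ∀ m, ∑ k, ∑ l, W a b k l * φ k l m = 0) (h : ι → ι → ℝ) (c : ι) :
    ∑ p, ∑ u, W a b p u * diamond h φ p u c
      = 2 * ∑ u, ∑ q, (∑ p, W a b p u * h p q) * φ q u c := by
  have hfirst : ∑ p, ∑ u, ∑ q, W a b p u * (h p q * φ q u c)
      = ∑ u, ∑ q, (∑ p, W a b p u * h p q) * φ q u c := by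
    simp_rw [sum_mul, ← mul_assoc]
    exact sum_comm_cycle.symm
  have hsecond : ∑ p, ∑ u, ∑ q, W a b p u * (h u q * φ p q c)
      = ∑ p, ∑ u, ∑ q, W a b p u * (h p q * φ q u c) := by
    rw [sum_comm]
    refine sum_congr rfl fun p _ => sum_congr rfl fun u _ => sum_congr rfl fun q _ => ?_
    rw [hW.antisymm_right, hφ1]
    ring
  have hthird : ∑ p, ∑ u, ∑ q, W a b p u * (h c q * φ p u q) = 0 := by
    rw [sum_comm_cycle]
    refine sum_eq_zero fun q _ => ?_
    simp_rw [mul_left_comm _ (h c q), ← mul_sum, h14, mul_zero]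
  conv_lhs => simp only [diamond, mul_sum, mul_add, sum_add_distrib]
  rw [hsecond, hthird, hfirst]
  ring

theorem sum_weylTerm_mul_phi (hW : IsAlgCurvatureTensor W) {φ β : ι → ι → ι → ℝ}
    (hφ1 : ∀ i j k, φ i j k = -φ j i k) (hφ2 : ∀ i j k, φ i j k = -φ i k j)
    (hβ : ∀ i j k, β i j k = -β i k j)
    (h14 : ∀ i j m, ∑ k, ∑ l, W i j k l * φ k l m = 0) (a t : ι) :
    ∑ b, ∑ c, weylTerm W β a b c * φ t b c
      = 2 * ∑ b, ∑ c, (∑ p, ∑ u, W a b p u * β p u c) * φ t b c := by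
  have hsecond : ∑ b, ∑ c, (∑ p, ∑ u, W a c p u * β p b u) * φ t b c
      = ∑ b, ∑ c, (∑ p, ∑ u, W a b p u * β p u c) * φ t b c := by
    rw [sum_comm]
    refine sum_congr rfl fun b _ => sum_congr rfl fun c _ => ?_
    simp only [fun i k => hβ i c k, hφ2 t c b, mul_neg, neg_mul, sum_neg_distrib, neg_neg]
  have hthird : ∑ b, ∑ c, (∑ p, ∑ u, W b c p u * β a p u) * φ t b c = 0 := by
    simp_rw [sum_mul]
    rw [sum_sum_comm_sum_sum]
    refine sum_eq_zero fun p _ => sum_eq_zero fun u _ => ?_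
    simp_rw [mul_right_comm _ (β a p u), ← sum_mul,
      hW.sum_mul_phi_eq_zero hφ1 hφ2 (h14 p u t), zero_mul]
  simp_rw [weylTerm, sum_add_distrib, add_mul, sum_add_distrib]
  rw [hsecond, hthird]
  ring

end IsAlgCurvatureTensor

end

theorem sum_sum_mul_phi_mul_phi {φ : Fin 7 → Fin 7 → Fin 7 → ℝ}
    {ψ : Fin 7 → Fin 7 → Fin 7 → Fin 7 → ℝ}
    (hφφ : ∀ i j a b, ∑ k, φ i j k * φ a b k =
      kd7 i a * kd7 j b - kd7 i b * kd7 j a - ψ i j a b)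
    (Y : Fin 7 → Fin 7 → Fin 7 → ℝ) (t : Fin 7) :
    ∑ b, ∑ c, (∑ u, ∑ q, Y b u q * φ q u c) * φ t b c
      = ∑ b, Y b b t - ∑ b, Y b t b - ∑ b, ∑ u, ∑ q, Y b u q * ψ q u t b := by
  have hcontract : ∀ b, ∑ c, (∑ u, ∑ q, Y b u q * φ q u c) * φ t b c
      = ∑ u, ∑ q, Y b u q * (kd7 q t * kd7 u b - kd7 q b * kd7 u t - ψ q u t b) := by
    intro b
    simp_rw [← hφφ, mul_sum, sum_mul]
    rw [sum_comm]
    refine sum_congr rfl fun u _ => ?_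
    rw [sum_comm]
    exact sum_congr rfl fun q _ => sum_congr rfl fun c _ => by ring
  simp_rw [hcontract, mul_sub, sum_sub_distrib]
  simp [kd7, mul_ite]

theorem IsAlgCurvatureTensor.sum_mul_phi_mul_phi {W : Fin 7 → Fin 7 → Fin 7 → Fin 7 → ℝ}
    (hW : IsAlgCurvatureTensor W) {φ : Fin 7 → Fin 7 → Fin 7 → ℝ}
    {ψ : Fin 7 → Fin 7 → Fin 7 → Fin 7 → ℝ}
    (hψ1 : ∀ i j k l, ψ i j k l = -ψ j i k l) (hψ2 : ∀ i j k l, ψ i j k l = -ψ i k j l)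
    (hψ3 : ∀ i j k l, ψ i j k l = -ψ i j l k)
    (hφφ : ∀ i j a b, ∑ k, φ i j k * φ a b k =
      kd7 i a * kd7 j b - kd7 i b * kd7 j a - ψ i j a b)
    (hRic : ∀ i j, ∑ k, W k i j k = 0)
    (h14 : ∀ i j u v, ∑ k, ∑ l, W i j k l * ψ k l u v = 2 * W i j u v)
    {h : Fin 7 → Fin 7 → ℝ} (hsymm : ∀ i j, h i j = h j i) (a t : Fin 7) :
    ∑ b, ∑ c, (∑ u, ∑ q, (∑ p, W a b p u * h p q) * φ q u c) * φ t b c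
      = 2 * curvatureAction W h a t := by
  have hricci : ∑ b, ∑ p, W a b p b * h p t = 0 := by
    rw [sum_comm]
    refine sum_eq_zero fun p _ => ?_
    simp_rw [← sum_mul, hW.antisymm_left a, sum_neg_distrib, hRic, neg_zero, zero_mul]
  have htrace : ∑ b, ∑ p, W a b p t * h p b = -curvatureAction W h a t := by
    rw [curvatureAction, ← sum_neg_distrib]
    refine sum_congr rfl fun b _ => ?_
    rw [← sum_neg_distrib]
    refine sum_congr rfl fun p _ => ?_
    rw [hW.antisymm_left, hsymm]
    ring
  have hpsi : ∑ b, ∑ u, ∑ q, (∑ p, W a b p u * h p q) * ψ q u t b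
      = -curvatureAction W h a t := by
    calc ∑ b, ∑ u, ∑ q, (∑ p, W a b p u * h p q) * ψ q u t b
        = ∑ q, ∑ p, h p q * ∑ b, ∑ u, W a b p u * ψ t b q u := by
          simp_rw [sum_mul, mul_sum]
          rw [sum_sum_comm_sum_sum]
          refine sum_congr rfl fun q _ => sum_congr rfl fun p _ =>
            sum_congr rfl fun b _ => sum_congr rfl fun u _ => ?_
          -- pair symmetry `ψ q u t b = ψ t b q u`
          rw [hψ1 q u t b, hψ2 u q t b, hψ3 u t q b, hψ1 u t b q, hψ2 t u b q, hψ3 t b u q]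
          ring
      _ = ∑ q, ∑ p, -(W p a q t * h p q) := by
          refine sum_congr rfl fun q _ => sum_congr rfl fun p _ => ?_
          rw [hW.sum_mul_psi_eq_neg hψ1 hψ2 hψ3 (h14 a p t q), hW.antisymm_left, hW.antisymm_right]
          ring
      _ = -curvatureAction W h a t := by
          rw [curvatureAction, sum_comm]
          simp only [sum_neg_distrib]
  simp only [sum_sum_mul_phi_mul_phi hφφ, hricci, htrace, hpsi]
  ring

theorem G2_weyl_term_of_weitzenbock_on_3forms_general
    (φ : Fin 7 → Fin 7 → Fin 7 → ℝ)
    (ψ : Fin 7 → Fin 7 → Fin 7 → Fin 7 → ℝ)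
    (W : Fin 7 → Fin 7 → Fin 7 → Fin 7 → ℝ)
    (h : Fin 7 → Fin 7 → ℝ)
    (β : Fin 7 → Fin 7 → Fin 7 → ℝ)
    (γ : Fin 7 → Fin 7 → Fin 7 → ℝ)
    (hφ1 : ∀ i j k, φ i j k = - φ j i k)
    (hφ2 : ∀ i j k, φ i j k = - φ i k j)
    (hψ1 : ∀ i j k l, ψ i j k l = - ψ j i k l)
    (hψ2 : ∀ i j k l, ψ i j k l = - ψ i k j l)
    (hψ3 : ∀ i j k l, ψ i j k l = - ψ i j l k)
    (hφφ : ∀ i j a b, ∑ k, φ i j k * φ a b k =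
      kd7 i a * kd7 j b - kd7 i b * kd7 j a - ψ i j a b)
    (hW1 : ∀ i j p q, W i j p q = - W j i p q)
    (hW2 : ∀ i j p q, W i j p q = - W i j q p)
    (hW3 : ∀ i j p q, W i j p q = W p q i j)
    (hBianchi : ∀ i j p q, W i j p q + W p i j q + W j p i q = 0)
    (hRic : ∀ i j, ∑ k, W k i j k = 0)
    (hW14φ : ∀ i j m, ∑ k, ∑ l, W i j k l * φ k l m = 0)
    (hW14ψ : ∀ i j u v, ∑ k, ∑ l, W i j k l * ψ k l u v = 2 * W i j u v)
    (hsymm : ∀ i j, h i j = h j i)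
    (hβ : ∀ i j k, β i j k =
      ∑ p, (h i p * φ p j k + h j p * φ i p k + h k p * φ i j p))
    (hγ : ∀ a b c, γ a b c = ∑ p, ∑ u,
      (W a b p u * β p u c + W a c p u * β p b u + W b c p u * β a p u)) :
    ∀ a t, ∑ b, ∑ c, γ a b c * φ t b c = 8 * ∑ k, ∑ l, W k a l t * h k l := by
  intro a t
  have hW : IsAlgCurvatureTensor W := ⟨hW1, hW2, hW3, hBianchi⟩
  obtain rfl : β = diamond h φ := funext fun i => funext fun j => funext fun k => hβ i j k
  obtain rfl : γ = weylTerm W (diamond h φ) :=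
    funext fun a => funext fun b => funext fun c => hγ a b c
  rw [hW.sum_weylTerm_mul_phi hφ1 hφ2 (diamond_antisymm hφ2 h) hW14φ]
  simp_rw [hW.sum_mul_diamond hφ1 (hW14φ a _) h, mul_assoc, ← mul_sum]
  rw [hW.sum_mul_phi_mul_phi hψ1 hψ2 hψ3 hφφ hRic hW14ψ hsymm, curvatureAction]
  ring

theorem G2_weyl_term_of_weitzenbock_on_3forms
    (φ : Fin 7 → Fin 7 → Fin 7 → ℝ)
    (ψ : Fin 7 → Fin 7 → Fin 7 → Fin 7 → ℝ)
    (W : Fin 7 → Fin 7 → Fin 7 → Fin 7 → ℝ)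
    (h : Fin 7 → Fin 7 → ℝ)
    (β : Fin 7 → Fin 7 → Fin 7 → ℝ)
    (γ : Fin 7 → Fin 7 → Fin 7 → ℝ)
    (hφ1 : ∀ i j k, φ i j k = - φ j i k)
    (hφ2 : ∀ i j k, φ i j k = - φ i k j)
    (hψ1 : ∀ i j k l, ψ i j k l = - ψ j i k l)
    (hψ2 : ∀ i j k l, ψ i j k l = - ψ i k j l)
    (hψ3 : ∀ i j k l, ψ i j k l = - ψ i j l k)
    (hφφ : ∀ i j a b, ∑ k, φ i j k * φ a b k =
      kd7 i a * kd7 j b - kd7 i b * kd7 j a - ψ i j a b)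
    (hφψ : ∀ i j a b c, ∑ k, φ i j k * ψ a b c k =
        kd7 i a * φ j b c + kd7 i b * φ a j c + kd7 i c * φ a b j
      - kd7 a j * φ i b c - kd7 b j * φ a i c - kd7 c j * φ a b i)
    (hW1 : ∀ i j p q, W i j p q = - W j i p q)
    (hW2 : ∀ i j p q, W i j p q = - W i j q p)
    (hW3 : ∀ i j p q, W i j p q = W p q i j)
    (hBianchi : ∀ i j p q, W i j p q + W p i j q + W j p i q = 0)
    (hRic : ∀ i j, ∑ k, W k i j k = 0)
    (hW14φ : ∀ i j m, ∑ k, ∑ l, W i j k l * φ k l m = 0)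
    (hW14ψ : ∀ i j u v, ∑ k, ∑ l, W i j k l * ψ k l u v = 2 * W i j u v)
    (hsymm : ∀ i j, h i j = h j i)
    (hβ : ∀ i j k, β i j k =
      ∑ p, (h i p * φ p j k + h j p * φ i p k + h k p * φ i j p))
    (hγ : ∀ a b c, γ a b c = ∑ p, ∑ u,
      (W a b p u * β p u c + W a c p u * β p b u + W b c p u * β a p u)) :
    ∀ a t, ∑ b, ∑ c, γ a b c * φ t b c = 8 * ∑ k, ∑ l, W k a l t * h k l :=
  G2_weyl_term_of_weitzenbock_on_3forms_general φ ψ W h β γ hφ1 hφ2 hψ1 hψ2 hψ3 hφφ hW1 hW2 hW3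
    hBianchi hRic hW14φ hW14ψ hsymm hβ hγ
end

section
/- On ℝ⁶, let (ω, ψ⁺, ψ⁻) satisfy the SU(3) contraction identities. Let c ∈ ℝ, X ∈ ℝ⁶, and let h₀ = ((h₀)_{ij}) be symmetric with ∑_i (h₀)_{ii} = 0 and commuting with ω (∑_p (h₀)_{ip}ω_{pj} = ∑_p ω_{ip}(h₀)_{pj}). Set h_{ij} = c δ_{ij} + ∑_u X_u ψ⁺_{uij} + (h₀)_{ij} and β = h ⋄ ω. Then ∑_k β_{ik}ω_{ak} = 2 h_{ia} for all i, a; in particular, a 2-form β = h ⋄ ω determines h by h = (1/2)β̂ with β̂_{ia} = ∑_k β_{ik}ω_{ak}. -/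
open scoped BigOperators

/-- Kronecker delta on `Fin 6`. -/
noncomputable def kd6 (i j : Fin 6) : ℝ := if i = j then 1 else 0

/-!
As matrices, `β = hω + ωhᵀ`, so `ωωᵀ = 1` gives `βωᵀ = h + ωhᵀωᵀ`, which is `2h` once
`ωhᵀ = hω`. That identity is additive in `h`: it holds for `c·g`, for `h₀` because `h₀` is
symmetric and commutes with `ω`, and for `A = X ⌟ ψ⁺` because `A` is skew and anticommutes
with `ω`. The anticommutation is `ψ⁺ ⌟ ω = -ψ⁻` in disguise: `Aωᵀ = -(X ⌟ ψ⁻)` is skew, and for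
skew `A` and `ω` this says `Aω = -ωA`.
-/

open Matrix

variable {n R : Type*} [Fintype n] [CommRing R]

def interiorProduct (x : n → R) (T : n → n → n → R) : Matrix n n R :=
  of fun i j => ∑ u, x u * T u i j

theorem interiorProduct_transpose {x : n → R} {T : n → n → n → R}
    (hT : ∀ u i j, T u i j = -T u j i) :
    (interiorProduct x T)ᵀ = -interiorProduct x T := by
  ext i j
  simp [interiorProduct, hT _ j i]

theorem interiorProduct_mul_transpose {x : n → R} {T S : n → n → n → R} {Ω : Matrix n n R}
    (hTΩ : ∀ u i a, ∑ k, T u i k * Ω a k = S u i a) :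
    interiorProduct x T * Ωᵀ = interiorProduct x S := by
  ext i a
  simp only [interiorProduct, mul_apply, of_apply, transpose_apply, Finset.sum_mul, mul_assoc]
  rw [Finset.sum_comm]
  simp only [← Finset.mul_sum, hTΩ]

theorem mul_eq_neg_mul_of_mul_transpose_skew {A Ω : Matrix n n R}
    (hΩ : Ωᵀ = -Ω) (hA : Aᵀ = -A) (hAΩ : (A * Ωᵀ)ᵀ = -(A * Ωᵀ)) :
    A * Ω = -(Ω * A) := by
  rw [transpose_mul, transpose_transpose, hA, hΩ] at hAΩ
  simpa using hAΩ.symm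

theorem mul_transpose_eq_mul_of_anticomm_of_comm [DecidableEq n] {Ω A H₀ : Matrix n n R} (c : R)
    (hA : Aᵀ = -A) (hAΩ : A * Ω = -(Ω * A)) (hH₀ : H₀ᵀ = H₀) (hH₀Ω : H₀ * Ω = Ω * H₀) :
    Ω * (c • 1 + A + H₀)ᵀ = (c • 1 + A + H₀) * Ω := by
  simp only [transpose_add, transpose_smul, transpose_one, hA, hH₀, mul_add, add_mul, hAΩ, hH₀Ω,
    mul_smul_comm, smul_mul, mul_one, one_mul, mul_neg]

theorem mul_add_mul_transpose_mul_transpose [DecidableEq n] {Ω H : Matrix n n R}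
    (hΩ : Ω * Ωᵀ = 1) (hHΩ : Ω * Hᵀ = H * Ω) :
    (H * Ω + Ω * Hᵀ) * Ωᵀ = 2 • H := by
  rw [hHΩ, ← two_smul ℕ (H * Ω), smul_mul, Matrix.mul_assoc, hΩ, Matrix.mul_one]

theorem kd6_eq_one_apply (i j : Fin 6) : kd6 i j = (1 : Matrix (Fin 6) (Fin 6) ℝ) i j := by
  simp [kd6, one_apply]

theorem two_form_hat_eq_two_h_general
    (ω : Fin 6 → Fin 6 → ℝ)
    (ψp ψm : Fin 6 → Fin 6 → Fin 6 → ℝ)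
    (hω_skew : ∀ i j, ω i j = - ω j i)
    (hω_unit : ∀ i j, ∑ k, ω i k * ω j k = kd6 i j)
    (hψp2 : ∀ i j k, ψp i j k = - ψp i k j)
    (hψm2 : ∀ i j k, ψm i j k = - ψm i k j)
    (hψpω : ∀ i j a, ∑ k, ψp i j k * ω a k = - ψm i j a)
    (c : ℝ) (X : EuclideanSpace ℝ (Fin 6))
    (h₀ : Fin 6 → Fin 6 → ℝ)
    (h₀symm : ∀ i j, h₀ i j = h₀ j i)
    (h₀comm : ∀ i j, ∑ p, h₀ i p * ω p j = ∑ p, ω i p * h₀ p j)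
    (h : Fin 6 → Fin 6 → ℝ)
    (hh : ∀ i j, h i j = c * kd6 i j + (∑ u, X u * ψp u i j) + h₀ i j)
    (β : Fin 6 → Fin 6 → ℝ)
    (hβ : ∀ i j, β i j = ∑ p, (h i p * ω p j + h j p * ω i p)) :
    ∀ i a, ∑ k, β i k * ω a k = 2 * h i a := by
  set Ω : Matrix (Fin 6) (Fin 6) ℝ := of ω
  set A := interiorProduct X ψp
  have hΩ_skew : Ωᵀ = -Ω := by ext i j; simp [Ω, hω_skew j i]
  have hΩ_unit : Ω * Ωᵀ = 1 := by ext i j; simp [Ω, mul_apply, ← kd6_eq_one_apply, hω_unit]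
  have hA : Aᵀ = -A := interiorProduct_transpose hψp2
  have hAΩ : A * Ωᵀ = interiorProduct X (-ψm) :=
    interiorProduct_mul_transpose (by simpa [Ω] using hψpω)
  have hAΩ_skew : (A * Ωᵀ)ᵀ = -(A * Ωᵀ) := by
    rw [hAΩ]; exact interiorProduct_transpose fun u i j => by simp [hψm2 u i j]
  have hH₀ : (of h₀)ᵀ = of h₀ := by ext i j; simp [h₀symm j i]
  have hH₀Ω : of h₀ * Ω = Ω * of h₀ := by ext i j; simp [Ω, mul_apply, h₀comm]
  have hH : of h = c • 1 + A + of h₀ := by ext i j; simp [A, interiorProduct, hh, kd6_eq_one_apply]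
  have hB : of β = of h * Ω + Ω * (of h)ᵀ := by
    ext i j; simp [Ω, hβ, mul_apply, Finset.sum_add_distrib, mul_comm]
  have key := mul_add_mul_transpose_mul_transpose hΩ_unit <| hH ▸
    mul_transpose_eq_mul_of_anticomm_of_comm c hA
      (mul_eq_neg_mul_of_mul_transpose_skew hΩ_skew hA hAΩ_skew) hH₀ hH₀Ω
  intro i a
  simpa [← hB, Ω, mul_apply] using congrFun (congrFun key i) a

theorem two_form_hat_eq_two_h
    (ω : Fin 6 → Fin 6 → ℝ)
    (ψp ψm : Fin 6 → Fin 6 → Fin 6 → ℝ)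
    (hω_skew : ∀ i j, ω i j = - ω j i)
    (hω_unit : ∀ i j, ∑ k, ω i k * ω j k = kd6 i j)
    (hψp1 : ∀ i j k, ψp i j k = - ψp j i k)
    (hψp2 : ∀ i j k, ψp i j k = - ψp i k j)
    (hψm1 : ∀ i j k, ψm i j k = - ψm j i k)
    (hψm2 : ∀ i j k, ψm i j k = - ψm i k j)
    (hψpω : ∀ i j a, ∑ k, ψp i j k * ω a k = - ψm i j a)
    (hψpψp : ∀ i j a b, ∑ k, ψp i j k * ψp a b k =
      kd6 i a * kd6 j b - kd6 i b * kd6 j a - ω i a * ω j b + ω i b * ω j a)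
    (c : ℝ) (X : EuclideanSpace ℝ (Fin 6))
    (h₀ : Fin 6 → Fin 6 → ℝ)
    (h₀symm : ∀ i j, h₀ i j = h₀ j i)
    (h₀tr : ∑ i, h₀ i i = 0)
    (h₀comm : ∀ i j, ∑ p, h₀ i p * ω p j = ∑ p, ω i p * h₀ p j)
    (h : Fin 6 → Fin 6 → ℝ)
    (hh : ∀ i j, h i j = c * kd6 i j + (∑ u, X u * ψp u i j) + h₀ i j)
    (β : Fin 6 → Fin 6 → ℝ)
    (hβ : ∀ i j, β i j = ∑ p, (h i p * ω p j + h j p * ω i p)) :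
    ∀ i a, ∑ k, β i k * ω a k = 2 * h i a :=
  two_form_hat_eq_two_h_general ω ψp ψm hω_skew hω_unit hψp2 hψm2 hψpω c X h₀ h₀symm h₀comm h hh β
    hβ
end

section
/- For all vectors b, c, d, e ∈ ℝ³ satisfying 2⟨b,d⟩ + 2⟨c,e⟩ + ⟨b,e⟩ + ⟨c,d⟩ = 0, one has |b|²|e|² + |c|²|d|² − 2⟨b,c⟩⟨d,e⟩ − 2⟨b,d⟩⟨c,e⟩ + 2⟨b,e⟩⟨c,d⟩ ≥ 0. -/
open scoped InnerProductSpace TensorProduct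

/-!
Realise `x ∧ y` as the antisymmetric tensor `x ⊗ y - y ⊗ x`, so that
`⟪x ∧ y, z ∧ w⟫ = 2 (⟪x, z⟫⟪y, w⟫ - ⟪x, w⟫⟪y, z⟫)` (in `ℝ³` this is the cross-product identity).
The quantity in question is `‖b ∧ e - c ∧ d‖² / 2 + (⟪b, e⟫ + ⟪c, d⟫)² - 4 ⟪b, d⟫⟪c, e⟫`, and the
linear constraint turns the last two terms into `4 (p² + pq + q²) ≥ 0` with `p = ⟪b, d⟫`,
`q = ⟪c, e⟫`.
-/

section Wedge

variable {E : Type*} [NormedAddCommGroup E] [InnerProductSpace ℝ E]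

def tensorWedge (x y : E) : E ⊗[ℝ] E := x ⊗ₜ y - y ⊗ₜ x

theorem inner_tensorWedge_tensorWedge (x y z w : E) :
    ⟪tensorWedge x y, tensorWedge z w⟫_ℝ = 2 * (⟪x, z⟫_ℝ * ⟪y, w⟫_ℝ - ⟪x, w⟫_ℝ * ⟪y, z⟫_ℝ) := by
  simp only [tensorWedge, inner_sub_left, inner_sub_right, TensorProduct.inner_tmul]
  ring

theorem norm_tensorWedge_sub_tensorWedge_sq (b c d e : E) :
    ‖tensorWedge b e - tensorWedge c d‖ ^ 2 =
      2 * (‖b‖ ^ 2 * ‖e‖ ^ 2 + ‖c‖ ^ 2 * ‖d‖ ^ 2 - 2 * ⟪b, c⟫_ℝ * ⟪d, e⟫_ℝ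
        + 2 * ⟪b, d⟫_ℝ * ⟪c, e⟫_ℝ - ⟪b, e⟫_ℝ ^ 2 - ⟪c, d⟫_ℝ ^ 2) := by
  rw [norm_sub_sq_real, ← real_inner_self_eq_norm_sq, ← real_inner_self_eq_norm_sq,
    inner_tensorWedge_tensorWedge, inner_tensorWedge_tensorWedge, inner_tensorWedge_tensorWedge]
  simp only [real_inner_self_eq_norm_sq, real_inner_comm b e, real_inner_comm c d,
    real_inner_comm e d, real_inner_comm e c]
  ring

end Wedge

theorem su2_cross_product_inequality
    (b c d e : EuclideanSpace ℝ (Fin 3))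
    (hortho : 2 * ⟪b, d⟫_ℝ + 2 * ⟪c, e⟫_ℝ + ⟪b, e⟫_ℝ + ⟪c, d⟫_ℝ = 0) :
    0 ≤ ‖b‖ ^ 2 * ‖e‖ ^ 2 + ‖c‖ ^ 2 * ‖d‖ ^ 2
      - 2 * ⟪b, c⟫_ℝ * ⟪d, e⟫_ℝ - 2 * ⟪b, d⟫_ℝ * ⟪c, e⟫_ℝ
      + 2 * ⟪b, e⟫_ℝ * ⟪c, d⟫_ℝ := by
  set p := ⟪b, d⟫_ℝ
  set q := ⟪c, e⟫_ℝ
  have hwedge := norm_tensorWedge_sub_tensorWedge_sq b c d e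
  have hsplit : ‖b‖ ^ 2 * ‖e‖ ^ 2 + ‖c‖ ^ 2 * ‖d‖ ^ 2 - 2 * ⟪b, c⟫_ℝ * ⟪d, e⟫_ℝ - 2 * p * q
      + 2 * ⟪b, e⟫_ℝ * ⟪c, d⟫_ℝ
      = ‖tensorWedge b e - tensorWedge c d‖ ^ 2 / 2 + 2 * ((p + q) ^ 2 + p ^ 2 + q ^ 2) := by
    linear_combination (-1 / 2 : ℝ) * hwedge + (⟪b, e⟫_ℝ + ⟪c, d⟫_ℝ - 2 * (p + q)) * hortho
  rw [hsplit]
  positivity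
end
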